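/- arXiv:1203.2282 — 10 statements merged into one kernel-verified Lean document; each statement's English description precedes it below -/
import Mathlib

section
/- If f : [a,b] → ℝ is convex with a < b, then f((a+b)/2) ≤ (1/(b-a)) ∫_a^b f(x) dx ≤ (f(a)+f(b))/2. -/
/-!
Averaging `f` with its reflection `x ↦ f (a + b - x)` does not change the integral, and by
convexity the symmetrized function `(f x + f (a + b - x)) / 2` lies between `f ((a + b) / 2)`
and `(f a + f b) / 2` on `[a, b]`. Integrating these two pointwise bounds gives both inequalities.
-/

open MeasureTheory intervalIntegral

/-- The points `z` and `x + y - z` of the segment `[x, y]` carry the weights `(p, q)` and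
`(q, p)`, so their convexity bounds add up to `f x + f y`. -/
theorem ConvexOn.map_add_map_sub_le_of_mem_segment {𝕜 E β : Type*} [CommRing 𝕜]
    [PartialOrder 𝕜] [AddCommGroup E] [Module 𝕜 E] [AddCommMonoid β] [PartialOrder β]
    [IsOrderedAddMonoid β] [Module 𝕜 β] {s : Set E} {f : E → β} {x y z : E}
    (hf : ConvexOn 𝕜 s f) (hx : x ∈ s) (hy : y ∈ s) (hz : z ∈ segment 𝕜 x y) :
    f z + f (x + y - z) ≤ f x + f y := by
  obtain ⟨p, q, hp, hq, hpq, rfl⟩ := hz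
  have hreflect : x + y - (p • x + q • y) = q • x + p • y := by
    linear_combination (norm := module) -hpq • (x + y)
  calc f (p • x + q • y) + f (x + y - (p • x + q • y))
      ≤ (p • f x + q • f y) + (q • f x + p • f y) := by
        rw [hreflect]
        exact add_le_add (hf.2 hx hy hp hq hpq) (hf.2 hx hy hq hp ((add_comm q p).trans hpq))
    _ = f x + f y := by
        rw [add_add_add_comm, ← add_smul, ← add_smul, add_comm q p, hpq, one_smul, one_smul]

theorem ConvexOn.map_midpoint_le {E : Type*} [AddCommGroup E] [Module ℝ E] {s : Set E}
    {f : E → ℝ} {x y : E} (hf : ConvexOn ℝ s f) (hx : x ∈ s) (hy : y ∈ s) :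
    f (midpoint ℝ x y) ≤ (f x + f y) / 2 := by
  have h := hf.2 hx hy (by norm_num : (0 : ℝ) ≤ 1 / 2) (by norm_num : (0 : ℝ) ≤ 1 / 2)
    (by norm_num)
  rw [midpoint_eq_smul_add, smul_add]
  simpa [smul_eq_mul, div_eq_inv_mul, mul_add] using h

section Reflection

variable {E : Type*} [NormedAddCommGroup E] {a b : ℝ} {f : ℝ → E}

theorem IntervalIntegrable.comp_add_sub (hf : IntervalIntegrable f volume a b) :
    IntervalIntegrable (fun x => f (a + b - x)) volume a b := by
  simpa using (hf.comp_sub_left (a + b)).symm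

theorem intervalIntegral.integral_comp_add_sub [NormedSpace ℝ E] :
    ∫ x in a..b, f (a + b - x) = ∫ x in a..b, f x := by
  simp [integral_comp_sub_left]

end Reflection

section Interval

variable {a b x : ℝ} {f : ℝ → ℝ}

theorem ConvexOn.two_mul_map_midpoint_le_add_reflect (hf : ConvexOn ℝ (Set.Icc a b) f)
    (hx : x ∈ Set.Icc a b) : 2 * f ((a + b) / 2) ≤ f x + f (a + b - x) := by
  have hx' : a + b - x ∈ Set.Icc a b := ⟨by linarith [hx.2], by linarith [hx.1]⟩
  have hmid : midpoint ℝ x (a + b - x) = (a + b) / 2 := by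
    rw [midpoint_eq_smul_add, smul_eq_mul, invOf_eq_inv]; ring
  linarith [hmid ▸ hf.map_midpoint_le hx hx']

theorem ConvexOn.add_reflect_le_add (hf : ConvexOn ℝ (Set.Icc a b) f) (hab : a ≤ b)
    (hx : x ∈ Set.Icc a b) : f x + f (a + b - x) ≤ f a + f b :=
  hf.map_add_map_sub_le_of_mem_segment (Set.left_mem_Icc.2 hab) (Set.right_mem_Icc.2 hab)
    (segment_eq_Icc hab ▸ hx)

end Interval

theorem hermite_hadamard (a b : ℝ) (hab : a < b) (f : ℝ → ℝ)
    (hconv : ConvexOn ℝ (Set.Icc a b) f)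
    (hint : IntervalIntegrable f volume a b) :
    f ((a + b) / 2) ≤ (1 / (b - a)) * ∫ x in a..b, f x ∧
    (1 / (b - a)) * ∫ x in a..b, f x ≤ (f a + f b) / 2 := by
  have hba : 0 < b - a := sub_pos.2 hab
  have hsym_int : IntervalIntegrable (fun x => f x + f (a + b - x)) volume a b :=
    hint.add hint.comp_add_sub
  have hsym : ∫ x in a..b, (f x + f (a + b - x)) = 2 * ∫ x in a..b, f x := by
    rw [integral_add hint hint.comp_add_sub, integral_comp_add_sub]; ring
  have lower := integral_mono_on hab.le intervalIntegrable_const hsym_int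
    fun x hx => hconv.two_mul_map_midpoint_le_add_reflect hx
  have upper := integral_mono_on hab.le hsym_int intervalIntegrable_const
    fun x hx => hconv.add_reflect_le_add hab.le hx
  rw [intervalIntegral.integral_const, hsym, smul_eq_mul] at lower upper
  rw [one_div_mul_eq_div]
  exact ⟨(le_div_iff₀ hba).2 (by linarith), (div_le_iff₀ hba).2 (by linarith)⟩
end

section
/- If f is differentiable on an open interval containing [a,b] with a < b and f' is integrable on [a,b], then (1/(b-a)) ∫_a^b f(x) dx − f((a+b)/2) = (b-a) [ ∫_0^{1/2} t·f'(ta+(1-t)b) dt + ∫_{1/2}^1 (t-1)·f'(ta+(1-t)b) dt ]. -/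
/-!
Put `g t = f (t * a + (1 - t) * b)`, so that `g' t = (a - b) * f' (t * a + (1 - t) * b)`,
`g (1 / 2) = f ((a + b) / 2)` and `∫₀¹ g = (b - a)⁻¹ ∫ₐᵇ f`. Integrating `t * g'` over `[0, 1/2]` and
`(t - 1) * g'` over `[1/2, 1]` by parts, the boundary terms are `g (1 / 2) / 2` each (the kernels
vanish at `0` and `1`), so the sum of the two integrals is `g (1 / 2) - ∫₀¹ g`.
-/

open MeasureTheory intervalIntegral Set
open scoped Interval

theorem integral_sub_mul_deriv_eq {g g' : ℝ → ℝ} {p q : ℝ} (c : ℝ)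
    (hg : ∀ t ∈ [[p, q]], HasDerivAt g (g' t) t) (hg' : IntervalIntegrable g' volume p q) :
    ∫ t in p..q, (t - c) * g' t = (q - c) * g q - (p - c) * g p - ∫ t in p..q, g t := by
  simpa using integral_mul_deriv_eq_deriv_mul (fun t _ => (hasDerivAt_id t).sub_const c) hg
    intervalIntegrable_const hg'

theorem midpoint_sub_integral_eq_peano_kernel {g g' : ℝ → ℝ}
    (hg : ∀ t ∈ [[(0 : ℝ), 1]], HasDerivAt g (g' t) t) (hg' : IntervalIntegrable g' volume 0 1) :
    g (1 / 2) - ∫ t in (0 : ℝ)..1, g t =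
      (∫ t in (0 : ℝ)..(1 / 2), t * g' t) + ∫ t in (1 / 2 : ℝ)..1, (t - 1) * g' t := by
  have hmid : (1 / 2 : ℝ) ∈ [[(0 : ℝ), 1]] := mem_uIcc_of_le (by norm_num) (by norm_num)
  have hleft : [[(0 : ℝ), 1 / 2]] ⊆ [[(0 : ℝ), 1]] := uIcc_subset_uIcc_left hmid
  have hright : [[(1 / 2 : ℝ), 1]] ⊆ [[(0 : ℝ), 1]] := uIcc_subset_uIcc_right hmid
  have hg_cont : ContinuousOn g [[(0 : ℝ), 1]] :=
    fun t ht => (hg t ht).continuousAt.continuousWithinAt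
  have hsplit := integral_add_adjacent_intervals
    ((hg_cont.mono hleft).intervalIntegrable (μ := volume))
    ((hg_cont.mono hright).intervalIntegrable (μ := volume))
  have hibp_left := integral_sub_mul_deriv_eq 0 (fun t ht => hg t (hleft ht)) (hg'.mono_set hleft)
  have hibp_right :=
    integral_sub_mul_deriv_eq 1 (fun t ht => hg t (hright ht)) (hg'.mono_set hright)
  simp only [sub_zero] at hibp_left
  linarith

theorem integral_comp_affine_unitInterval (f : ℝ → ℝ) {a b : ℝ} (hab : a ≠ b) :
    ∫ t in (0 : ℝ)..1, f (t * a + (1 - t) * b) = (1 / (b - a)) * ∫ x in a..b, f x := by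
  have hab' : a - b ≠ 0 := sub_ne_zero.mpr hab
  have hba : b - a ≠ 0 := sub_ne_zero.mpr hab.symm
  simp_rw [show ∀ t : ℝ, t * a + (1 - t) * b = (a - b) * t + b by intro t; ring]
  rw [integral_comp_mul_add f hab', integral_symm]
  simp only [mul_one, sub_add_cancel, mul_zero, zero_add, smul_eq_mul, mul_neg, one_div]
  field_simp
  ring

theorem IntervalIntegrable.comp_affine_unitInterval {f : ℝ → ℝ} {a b : ℝ}
    (hf : IntervalIntegrable f volume a b) :
    IntervalIntegrable (fun t => f (t * a + (1 - t) * b)) volume 0 1 := by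
  simp_rw [show ∀ t : ℝ, t * a + (1 - t) * b = (a - b) * t + b by intro t; ring]
  rcases eq_or_ne a b with rfl | hab
  · simp
  simpa [sub_ne_zero.mpr hab] using (hf.symm.comp_add_right b).comp_mul_left (c := a - b)

theorem midpoint_identity (a b : ℝ) (hab : a < b) (f f' : ℝ → ℝ)
    (hf : ∀ x ∈ Set.Icc a b, HasDerivAt f (f' x) x)
    (hint : IntervalIntegrable f' volume a b) :
    (1 / (b - a)) * (∫ x in a..b, f x) - f ((a + b) / 2) =
      (b - a) * ((∫ t in (0:ℝ)..(1/2), t * f' (t * a + (1 - t) * b)) +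
        ∫ t in (1/2:ℝ)..1, (t - 1) * f' (t * a + (1 - t) * b)) := by
  set l : ℝ → ℝ := fun t => t * a + (1 - t) * b with hl
  have hl_mem : ∀ t ∈ [[(0 : ℝ), 1]], l t ∈ Icc a b := by
    intro t ht
    rw [uIcc_of_le zero_le_one] at ht
    constructor <;> nlinarith [ht.1, ht.2]
  have hl_deriv (t : ℝ) : HasDerivAt l (a - b) t := by
    have hl_eq : l = fun s => (a - b) * s + b := by funext s; simp only [hl]; ring
    simpa [hl_eq] using ((hasDerivAt_id t).const_mul (a - b)).add_const b
  have hfl : ∀ t ∈ [[(0 : ℝ), 1]], HasDerivAt (f ∘ l) ((a - b) * f' (l t)) t := fun t ht => by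
    simpa [mul_comm] using (hf _ (hl_mem t ht)).comp t (hl_deriv t)
  have key := midpoint_sub_integral_eq_peano_kernel hfl
    (hint.comp_affine_unitInterval.const_mul (a - b))
  simp only [Function.comp_apply, mul_left_comm _ (a - b), intervalIntegral.integral_const_mul,
    hl, integral_comp_affine_unitInterval f hab.ne] at key
  rw [show (a + b) / 2 = 1 / 2 * a + (1 - 1 / 2) * b by ring]
  linear_combination -key
end

section
/- If f is differentiable on an open interval containing [a,b] with a < b and |f'| is convex on [a,b], then |(1/(b-a)) ∫_a^b f(x) dx − f((a+b)/2)| ≤ ((b-a)/4) · (|f'(a)| + |f'(b)|)/2. -/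
/-!
Integrating by parts against the Peano kernel `p`, equal to `x - a` on `[a, m]` and to `x - b`
on `[m, b]` (`m` the midpoint), expresses `(b - a) f(m) - ∫ f` as `∫ p f'`. Convexity bounds
`|f'|` by its secant through `(a, |f'(a)|)` and `(b, |f'(b)|)`, and integrating `|p|` against
this affine bound gives `(b - a)² (|f'(a)| + |f'(b)|) / 8`: the slope terms cancel because `|p|` is
symmetric about `m`.
-/

open MeasureTheory intervalIntegral Set

section

variable {f f' : ℝ → ℝ} {a b c : ℝ}

theorem integral_sub_mul_deriv (hf : ∀ x ∈ uIcc a b, HasDerivAt f (f' x) x)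
    (hf' : IntervalIntegrable f' volume a b) (d : ℝ) :
    ∫ x in a..b, (x - d) * f' x = (b - d) * f b - (a - d) * f a - ∫ x in a..b, f x := by
  simpa using integral_mul_deriv_eq_deriv_mul (fun x _ => (hasDerivAt_id x).sub_const d) hf
    intervalIntegrable_const hf'

theorem montgomery_identity (hc : c ∈ Icc a b) (hf : ∀ x ∈ Icc a b, HasDerivAt f (f' x) x)
    (hf' : IntervalIntegrable f' volume a b) :
    (b - a) * f c - ∫ x in a..b, f x =
      (∫ x in a..c, (x - a) * f' x) + ∫ x in c..b, (x - b) * f' x := by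
  have hac : uIcc a c ⊆ Icc a b := uIcc_subset_Icc (left_mem_Icc.2 (hc.1.trans hc.2)) hc
  have hcb : uIcc c b ⊆ Icc a b := uIcc_subset_Icc hc (right_mem_Icc.2 (hc.1.trans hc.2))
  have hfc : ContinuousOn f (Icc a b) := fun x hx => (hf x hx).continuousAt.continuousWithinAt
  rw [integral_sub_mul_deriv (fun x hx => hf x (hac hx))
      (hf'.mono_set (hac.trans Icc_subset_uIcc)) a,
    integral_sub_mul_deriv (fun x hx => hf x (hcb hx))
      (hf'.mono_set (hcb.trans Icc_subset_uIcc)) b,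
    ← integral_add_adjacent_intervals (hfc.mono hac).intervalIntegrable
      (hfc.mono hcb).intervalIntegrable]
  ring

theorem abs_mul_sub_integral_le {ℓ : ℝ → ℝ} (hc : c ∈ Icc a b)
    (hf : ∀ x ∈ Icc a b, HasDerivAt f (f' x) x) (hf' : IntervalIntegrable f' volume a b)
    (hℓ : IntervalIntegrable ℓ volume a b) (hle : ∀ x ∈ Icc a b, |f' x| ≤ ℓ x) :
    |(b - a) * f c - ∫ x in a..b, f x| ≤
      (∫ x in a..c, (x - a) * ℓ x) + ∫ x in c..b, (b - x) * ℓ x := by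
  have hc' : c ∈ uIcc a b := Icc_subset_uIcc hc
  rw [montgomery_identity hc hf hf']
  refine (abs_add_le _ _).trans (add_le_add ?_ ?_)
  · rw [← Real.norm_eq_abs]
    refine norm_integral_le_of_norm_le hc.1 (ae_of_all _ fun x hx => ?_)
      ((hℓ.mono_set (uIcc_subset_uIcc_left hc')).continuousOn_mul
        (continuous_sub_right a).continuousOn)
    rw [Real.norm_eq_abs, abs_mul, abs_of_nonneg (sub_nonneg.2 hx.1.le)]
    exact mul_le_mul_of_nonneg_left (hle x ⟨hx.1.le, hx.2.trans hc.2⟩) (sub_nonneg.2 hx.1.le)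
  · rw [← Real.norm_eq_abs]
    refine norm_integral_le_of_norm_le hc.2 (ae_of_all _ fun x hx => ?_)
      ((hℓ.mono_set (uIcc_subset_uIcc_right hc')).continuousOn_mul
        (continuous_sub_left b).continuousOn)
    rw [Real.norm_eq_abs, abs_mul, abs_sub_comm, abs_of_nonneg (sub_nonneg.2 hx.2)]
    exact mul_le_mul_of_nonneg_left (hle x ⟨hc.1.trans hx.1.le, hx.2⟩) (sub_nonneg.2 hx.2)

end

theorem ConvexOn.sub_mul_le_secant {a b x : ℝ} {g : ℝ → ℝ} (hg : ConvexOn ℝ (Icc a b) g)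
    (hx : x ∈ Icc a b) : (b - a) * g x ≤ (b - x) * g a + (x - a) * g b := by
  have hab : a ≤ b := hx.1.trans hx.2
  rcases hx.1.eq_or_lt with rfl | hax
  · linarith
  rcases hx.2.eq_or_lt with rfl | hxb
  · linarith
  exact hg.secant_mono_aux1 (left_mem_Icc.2 hab) (right_mem_Icc.2 hab) hax hxb

theorem integral_mul_affine (c d h : ℝ) :
    ∫ y in 0..h, y * (c + d * y) = c * h ^ 2 / 2 + d * h ^ 3 / 3 := by
  simp only [mul_add, mul_left_comm _ d, ← pow_two]
  rw [intervalIntegral.integral_add (by simp) (by simp), intervalIntegral.integral_mul_const,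
    intervalIntegral.integral_const_mul, integral_id, integral_pow]
  ring

theorem integral_kernel_mul_secant {a b : ℝ} (hab : a ≠ b) (A B : ℝ) :
    (∫ x in a..(a + b) / 2, (x - a) * (((b - x) * A + (x - a) * B) / (b - a))) +
      ∫ x in (a + b) / 2..b, (b - x) * (((b - x) * A + (x - a) * B) / (b - a)) =
    (b - a) ^ 2 * (A + B) / 8 := by
  have hba : b - a ≠ 0 := sub_ne_zero.2 hab.symm
  have left : ∫ x in a..(a + b) / 2, (x - a) * (((b - x) * A + (x - a) * B) / (b - a)) =
      ∫ y in 0..(b - a) / 2, y * (A + (B - A) / (b - a) * y) := calc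
    _ = ∫ x in a..(a + b) / 2, (fun y => y * (A + (B - A) / (b - a) * y)) (x - a) := by
      congr 1; ext x; field_simp; ring
    _ = _ := by
      rw [integral_comp_sub_right (fun y => y * (A + (B - A) / (b - a) * y))]
      congr 1 <;> ring
  have right : ∫ x in (a + b) / 2..b, (b - x) * (((b - x) * A + (x - a) * B) / (b - a)) =
      ∫ y in 0..(b - a) / 2, y * (B + (A - B) / (b - a) * y) := calc
    _ = ∫ x in (a + b) / 2..b, (fun y => y * (B + (A - B) / (b - a) * y)) (b - x) := by
      congr 1; ext x; field_simp; ring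
    _ = _ := by
      rw [integral_comp_sub_left (fun y => y * (B + (A - B) / (b - a) * y))]
      congr 1 <;> ring
  rw [left, right, integral_mul_affine, integral_mul_affine]
  field_simp
  ring

theorem kirmaci_midpoint (a b : ℝ) (hab : a < b) (f f' : ℝ → ℝ)
    (hf : ∀ x ∈ Set.Icc a b, HasDerivAt f (f' x) x)
    (hint : IntervalIntegrable f' volume a b)
    (hconv : ConvexOn ℝ (Set.Icc a b) (fun x => |f' x|)) :
    |(1 / (b - a)) * (∫ x in a..b, f x) - f ((a + b) / 2)| ≤
      ((b - a) / 4) * ((|f' a| + |f' b|) / 2) := by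
  have hba : 0 < b - a := sub_pos.2 hab
  have hsecant : ∀ x ∈ Icc a b, |f' x| ≤ ((b - x) * |f' a| + (x - a) * |f' b|) / (b - a) :=
    fun x hx => (le_div_iff₀' hba).2 (hconv.sub_mul_le_secant hx)
  have hbound := abs_mul_sub_integral_le (c := (a + b) / 2) ⟨by linarith, by linarith⟩ hf hint
    (Continuous.intervalIntegrable (by fun_prop) _ _) hsecant
  rw [integral_kernel_mul_secant hab.ne] at hbound
  calc |(1 / (b - a)) * (∫ x in a..b, f x) - f ((a + b) / 2)|
      = |(b - a) * f ((a + b) / 2) - ∫ x in a..b, f x| / (b - a) := by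
        rw [← abs_of_pos hba, ← abs_div, abs_of_pos hba, abs_sub_comm]
        congr 1
        field_simp
    _ ≤ (b - a) ^ 2 * (|f' a| + |f' b|) / 8 / (b - a) := by gcongr
    _ = ((b - a) / 4) * ((|f' a| + |f' b|) / 2) := by field_simp; ring
end

section
/- If f is differentiable on an open interval containing [a,b] with a < b and |f'| is convex on [a,b], then |(f(a)+f(b))/2 − (1/(b-a)) ∫_a^b f(x) dx| ≤ (b-a) · (|f'(a)| + |f'(b)|)/8. -/
open MeasureTheory intervalIntegral Set

/-!
Integration by parts against the kernel `x - (a + b) / 2` writes the trapezoid error as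
`(1 / (b - a)) * ∫ x in a..b, (x - (a + b) / 2) * f' x`. Convexity bounds `|f'|` by its chord
`(|f' a| * (b - x) + |f' b| * (x - a)) / (b - a)`, and the two weights
`∫ |x - (a + b) / 2| * (b - x)` and `∫ |x - (a + b) / 2| * (x - a)` agree under the reflection
`x ↦ a + b - x` and add up to `(b - a) * ∫ |x - (a + b) / 2| = (b - a) ^ 3 / 4`, so each is
`(b - a) ^ 3 / 8`.
-/

theorem ConvexOn.le_chord {𝕜 : Type*} [Field 𝕜] [LinearOrder 𝕜] [IsStrictOrderedRing 𝕜]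
    {s : Set 𝕜} {g : 𝕜 → 𝕜} (hg : ConvexOn 𝕜 s g) {a b x : 𝕜} (ha : a ∈ s) (hb : b ∈ s)
    (hx : x ∈ Icc a b) (hab : a < b) :
    g x ≤ (g a * (b - x) + g b * (x - a)) / (b - a) := by
  have hba : 0 < b - a := sub_pos.2 hab
  have key := hg.2 ha hb (div_nonneg (sub_nonneg.2 hx.2) hba.le)
    (div_nonneg (sub_nonneg.2 hx.1) hba.le) (by field)
  simp only [smul_eq_mul] at key
  convert key using 2
  · field
  · field

theorem integral_abs_sub_of_mem_Icc {a b c : ℝ} (hc : c ∈ Icc a b) :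
    ∫ x in a..b, |x - c| = ((c - a) ^ 2 + (b - c) ^ 2) / 2 := by
  have hcont : Continuous fun x : ℝ => |x - c| := by fun_prop
  have hleft : ∫ x in a..c, |x - c| = ∫ x in a..c, (c - x) := by
    refine integral_congr fun x hx => ?_
    rw [uIcc_of_le hc.1] at hx
    rw [abs_of_nonpos (sub_nonpos.2 hx.2), neg_sub]
  have hright : ∫ x in c..b, |x - c| = ∫ x in c..b, (x - c) := by
    refine integral_congr fun x hx => ?_
    rw [uIcc_of_le hc.2] at hx
    rw [abs_of_nonneg (sub_nonneg.2 hx.1)]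
  rw [← integral_add_adjacent_intervals (hcont.intervalIntegrable a c)
    (hcont.intervalIntegrable c b), hleft, hright,
    integral_sub intervalIntegrable_const intervalIntegral.intervalIntegrable_id,
    integral_sub intervalIntegral.intervalIntegrable_id intervalIntegrable_const]
  simp only [intervalIntegral.integral_const, integral_id, smul_eq_mul]
  ring

theorem integral_abs_sub_midpoint {a b : ℝ} (hab : a ≤ b) :
    ∫ x in a..b, |x - (a + b) / 2| = (b - a) ^ 2 / 4 := by
  rw [integral_abs_sub_of_mem_Icc ⟨by linarith, by linarith⟩]
  ring

theorem integral_abs_sub_midpoint_mul_sub_left_eq_right (a b : ℝ) :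
    ∫ x in a..b, |x - (a + b) / 2| * (x - a) = ∫ x in a..b, |x - (a + b) / 2| * (b - x) := by
  have := integral_comp_sub_left (a := a) (b := b) (fun x => |x - (a + b) / 2| * (b - x)) (a + b)
  rw [add_sub_cancel_right, add_sub_cancel_left] at this
  rw [← this]
  refine integral_congr fun x _ => ?_
  rw [show a + b - x - (a + b) / 2 = -(x - (a + b) / 2) by ring, abs_neg]
  ring

theorem integral_abs_sub_midpoint_mul_sub_left {a b : ℝ} (hab : a ≤ b) :
    ∫ x in a..b, |x - (a + b) / 2| * (x - a) = (b - a) ^ 3 / 8 := by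
  have hsum : (∫ x in a..b, |x - (a + b) / 2| * (x - a)) +
      ∫ x in a..b, |x - (a + b) / 2| * (b - x) = (b - a) * ∫ x in a..b, |x - (a + b) / 2| := by
    rw [← intervalIntegral.integral_add (Continuous.intervalIntegrable (by fun_prop) _ _)
      (Continuous.intervalIntegrable (by fun_prop) _ _), ← intervalIntegral.integral_const_mul]
    congr 1 with x
    ring
  rw [← integral_abs_sub_midpoint_mul_sub_left_eq_right, integral_abs_sub_midpoint hab] at hsum
  linarith

theorem integral_abs_sub_midpoint_mul_chord {a b : ℝ} (hab : a < b) (A B : ℝ) :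
    ∫ x in a..b, |x - (a + b) / 2| * ((A * (b - x) + B * (x - a)) / (b - a)) =
      (b - a) ^ 2 * (A + B) / 8 := by
  have hleft := integral_abs_sub_midpoint_mul_sub_left hab.le
  have hright : ∫ x in a..b, |x - (a + b) / 2| * (b - x) = (b - a) ^ 3 / 8 := by
    rw [← integral_abs_sub_midpoint_mul_sub_left_eq_right, hleft]
  have hsplit : (fun x => |x - (a + b) / 2| * ((A * (b - x) + B * (x - a)) / (b - a))) =
      fun x => A / (b - a) * (|x - (a + b) / 2| * (b - x)) +
        B / (b - a) * (|x - (a + b) / 2| * (x - a)) := by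
    ext x
    ring
  rw [hsplit, intervalIntegral.integral_add (Continuous.intervalIntegrable (by fun_prop) _ _)
    (Continuous.intervalIntegrable (by fun_prop) _ _), intervalIntegral.integral_const_mul,
    intervalIntegral.integral_const_mul, hleft, hright]
  field_simp

theorem trapezoid_sub_average_eq_integral_mul_deriv {a b : ℝ} {f f' : ℝ → ℝ} (hab : a ≠ b)
    (hf : ∀ x ∈ uIcc a b, HasDerivAt f (f' x) x) (hint : IntervalIntegrable f' volume a b) :
    (f a + f b) / 2 - (1 / (b - a)) * ∫ x in a..b, f x =
      (1 / (b - a)) * ∫ x in a..b, (x - (a + b) / 2) * f' x := by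
  have hparts := integral_mul_deriv_eq_deriv_mul
    (fun x _ => (hasDerivAt_id x).sub_const ((a + b) / 2)) hf intervalIntegrable_const hint
  simp only [id, one_mul] at hparts
  rw [hparts]
  have : b - a ≠ 0 := sub_ne_zero.2 hab.symm
  field_simp
  ring

theorem dragomir_agarwal (a b : ℝ) (hab : a < b) (f f' : ℝ → ℝ)
    (hf : ∀ x ∈ Set.Icc a b, HasDerivAt f (f' x) x)
    (hint : IntervalIntegrable f' volume a b)
    (hconv : ConvexOn ℝ (Set.Icc a b) (fun x => |f' x|)) :
    |(f a + f b) / 2 - (1 / (b - a)) * ∫ x in a..b, f x| ≤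
      (b - a) * ((|f' a| + |f' b|) / 8) := by
  rw [← uIcc_of_le hab.le] at hf
  rw [trapezoid_sub_average_eq_integral_mul_deriv hab.ne hf hint, abs_mul,
    abs_of_pos (one_div_pos.2 (sub_pos.2 hab))]
  calc 1 / (b - a) * |∫ x in a..b, (x - (a + b) / 2) * f' x|
      ≤ 1 / (b - a) * ∫ x in a..b,
          |x - (a + b) / 2| * ((|f' a| * (b - x) + |f' b| * (x - a)) / (b - a)) := by
        gcongr
        rw [← Real.norm_eq_abs]
        refine norm_integral_le_of_norm_le hab.le (ae_of_all _ fun x hx => ?_)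
          (Continuous.intervalIntegrable (by fun_prop) _ _)
        rw [Real.norm_eq_abs, abs_mul]
        gcongr
        exact hconv.le_chord (left_mem_Icc.2 hab.le) (right_mem_Icc.2 hab.le)
          (Ioc_subset_Icc_self hx) hab
    _ = (b - a) * ((|f' a| + |f' b|) / 8) := by
        rw [integral_abs_sub_midpoint_mul_chord hab]
        field_simp
end

section
/- If f is differentiable on an open interval containing [a,b] with a < b, q ≥ 1, and |f'|^q is convex on [a,b], then |(f(a)+f(b))/2 − (1/(b-a)) ∫_a^b f(x) dx| ≤ ((b-a)/4) · ((|f'(a)|^q + |f'(b)|^q)/2)^{1/q}. -/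
/-!
With `c = (a + b) / 2`, integration by parts gives
`(f a + f b) / 2 - (b - a)⁻¹ ∫ f = (b - a)⁻¹ ∫ (x - c) f'(x) dx`, so the error is at most
`(b - a)⁻¹ ∫ |x - c| |f'(x)| dx`. Convexity bounds `|f'|^q` by its secant line; as the weight
`|x - c|` is even about `c`, the secant integrates against it to `M (b - a)² / 4`, where `M` is
the mean of `|f'(a)|^q` and `|f'(b)|^q`. The power-mean inequality for this weight (the tangent
line of `s ↦ s ^ (1 / q)` at `M`) then gives `∫ |x - c| |f'| ≤ M ^ (1 / q) (b - a)² / 4`.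
-/

open MeasureTheory intervalIntegral Set

theorem integral_abs_sub_midpoint_mul_sub_midpoint (a b : ℝ) :
    ∫ x in a..b, |x - (a + b) / 2| * (x - (a + b) / 2) = 0 := by
  have h := integral_comp_sub_left (a := a) (b := b)
    (fun x => |x - (a + b) / 2| * (x - (a + b) / 2)) (a + b)
  have hodd : ∀ x : ℝ, |a + b - x - (a + b) / 2| * (a + b - x - (a + b) / 2) =
      -(|x - (a + b) / 2| * (x - (a + b) / 2)) := fun x => by
    rw [show a + b - x - (a + b) / 2 = -(x - (a + b) / 2) by ring, abs_neg, mul_neg]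
  simp only [hodd, intervalIntegral.integral_neg, add_sub_cancel_right,
    add_sub_cancel_left] at h
  linarith

theorem integral_abs_sub_midpoint_mul_affine {a b : ℝ} (hab : a ≤ b) (α β : ℝ) :
    ∫ x in a..b, |x - (a + b) / 2| * (α + β * (x - (a + b) / 2)) =
      α * ((b - a) ^ 2 / 4) := by
  have hsplit : (fun x => |x - (a + b) / 2| * (α + β * (x - (a + b) / 2))) =
      fun x => α * |x - (a + b) / 2| + β * (|x - (a + b) / 2| * (x - (a + b) / 2)) := by
    ext x
    ring
  rw [hsplit, intervalIntegral.integral_add ((by fun_prop : Continuous _).intervalIntegrable _ _)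
      ((by fun_prop : Continuous _).intervalIntegrable _ _),
    intervalIntegral.integral_const_mul, intervalIntegral.integral_const_mul,
    integral_abs_sub_midpoint hab, integral_abs_sub_midpoint_mul_sub_midpoint, mul_zero, add_zero]

theorem ConvexOn.le_midpoint_secant {g : ℝ → ℝ} {a b x : ℝ} (hg : ConvexOn ℝ (Icc a b) g)
    (hx : x ∈ Icc a b) :
    g x ≤ (g a + g b) / 2 + (g b - g a) / (b - a) * (x - (a + b) / 2) := by
  rcases eq_or_lt_of_le (hx.1.trans hx.2) with rfl | hab
  · simp [le_antisymm hx.2 hx.1]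
  have hba : 0 < b - a := sub_pos.2 hab
  have hcomb := hg.2 (left_mem_Icc.2 hab.le) (right_mem_Icc.2 hab.le)
    (div_nonneg (sub_nonneg.2 hx.2) hba.le) (div_nonneg (sub_nonneg.2 hx.1) hba.le)
    (by field_simp; ring)
  simp only [smul_eq_mul] at hcomb
  rw [show (b - x) / (b - a) * a + (x - a) / (b - a) * b = x by field_simp; ring] at hcomb
  refine hcomb.trans_eq ?_
  field_simp
  ring

theorem ConvexOn.intervalIntegrable_of_nonneg {g : ℝ → ℝ} {a b : ℝ} (hab : a ≤ b)
    (hg : ConvexOn ℝ (Icc a b) g) (hg0 : ∀ x ∈ Icc a b, 0 ≤ g x)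
    (hgm : AEStronglyMeasurable g (volume.restrict (uIoc a b))) :
    IntervalIntegrable g volume a b := by
  refine ((by fun_prop : Continuous fun x =>
      (g a + g b) / 2 + (g b - g a) / (b - a) * (x - (a + b) / 2)).intervalIntegrable a b).mono_fun'
    hgm (ae_restrict_of_forall_mem measurableSet_uIoc fun x hx => ?_)
  rw [uIoc_of_le hab] at hx
  have hx := Ioc_subset_Icc_self hx
  exact (Real.norm_of_nonneg (hg0 x hx)).trans_le (hg.le_midpoint_secant hx)

theorem ConvexOn.integral_abs_sub_midpoint_mul_le {g : ℝ → ℝ} {a b : ℝ} (hab : a ≤ b)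
    (hg : ConvexOn ℝ (Icc a b) g) (hgi : IntervalIntegrable g volume a b) :
    ∫ x in a..b, |x - (a + b) / 2| * g x ≤ (g a + g b) / 2 * ((b - a) ^ 2 / 4) := by
  calc ∫ x in a..b, |x - (a + b) / 2| * g x
      ≤ ∫ x in a..b, |x - (a + b) / 2| *
          ((g a + g b) / 2 + (g b - g a) / (b - a) * (x - (a + b) / 2)) :=
        integral_mono_on hab (hgi.continuousOn_mul (by fun_prop))
          ((by fun_prop : Continuous _).intervalIntegrable a b)
          fun x hx => mul_le_mul_of_nonneg_left (hg.le_midpoint_secant hx) (abs_nonneg _)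
    _ = (g a + g b) / 2 * ((b - a) ^ 2 / 4) := integral_abs_sub_midpoint_mul_affine hab _ _

theorem integral_mul_le_rpow_mul_integral {α : Type*} [MeasurableSpace α] {μ : Measure α}
    {w g : α → ℝ} {q M : ℝ} (hq : 1 ≤ q) (hM : 0 ≤ M) (hw : 0 ≤ w) (hg : 0 ≤ g)
    (hw_int : Integrable w μ) (hwg : Integrable (fun x => w x * g x) μ)
    (hwgq : Integrable (fun x => w x * g x ^ q) μ)
    (hmoment : ∫ x, w x * g x ^ q ∂μ ≤ M * ∫ x, w x ∂μ) :
    ∫ x, w x * g x ∂μ ≤ M ^ (1 / q) * ∫ x, w x ∂μ := by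
  have hq0 : 0 < q := one_pos.trans_le hq
  have hwgq_nonneg : 0 ≤ fun x => w x * g x ^ q :=
    fun x => mul_nonneg (hw x) (Real.rpow_nonneg (hg x) q)
  rcases hM.eq_or_lt with rfl | hM
  · have hzero : (fun x => w x * g x ^ q) =ᵐ[μ] 0 :=
      (integral_eq_zero_iff_of_nonneg hwgq_nonneg hwgq).1
        (le_antisymm (by simpa using hmoment) (integral_nonneg hwgq_nonneg))
    rw [Real.zero_rpow (by positivity), zero_mul, integral_eq_zero_of_ae]
    filter_upwards [hzero] with x hx
    rcases mul_eq_zero.1 hx with h | h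
    · simp [h]
    · simp [(Real.rpow_eq_zero (hg x) hq0.ne').1 h]
  -- the tangent line of the concave function `s ↦ s ^ (1 / q)` at `M`, multiplied out
  have htangent : ∀ x, w x * g x * M ^ (1 - 1 / q) ≤
      1 / q * (w x * g x ^ q) + (1 - 1 / q) * M * w x := fun x => by
    have := Real.geom_mean_le_arith_mean2_weighted (p₁ := g x ^ q) (p₂ := M)
      (by positivity) (sub_nonneg.2 ((div_le_one hq0).2 hq)) (Real.rpow_nonneg (hg x) q) hM.le
      (add_sub_cancel _ _)
    rw [← Real.rpow_mul (hg x), mul_one_div_cancel hq0.ne', Real.rpow_one] at this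
    linarith [mul_le_mul_of_nonneg_left this (hw x)]
  have hbound : M ^ (1 - 1 / q) * ∫ x, w x * g x ∂μ ≤
      M ^ (1 - 1 / q) * (M ^ (1 / q) * ∫ x, w x ∂μ) := by
    calc M ^ (1 - 1 / q) * ∫ x, w x * g x ∂μ
        = ∫ x, w x * g x * M ^ (1 - 1 / q) ∂μ := by
          rw [MeasureTheory.integral_mul_const, mul_comm]
      _ ≤ ∫ x, 1 / q * (w x * g x ^ q) + (1 - 1 / q) * M * w x ∂μ :=
        integral_mono (hwg.mul_const _) ((hwgq.const_mul _).add (hw_int.const_mul _)) htangent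
      _ = 1 / q * ∫ x, w x * g x ^ q ∂μ + (1 - 1 / q) * M * ∫ x, w x ∂μ := by
        rw [integral_add (hwgq.const_mul _) (hw_int.const_mul _),
          MeasureTheory.integral_const_mul, MeasureTheory.integral_const_mul]
      _ ≤ M * ∫ x, w x ∂μ := by nlinarith [one_div_pos.2 hq0]
      _ = M ^ (1 - 1 / q) * (M ^ (1 / q) * ∫ x, w x ∂μ) := by
        rw [← mul_assoc, ← Real.rpow_add hM, sub_add_cancel, Real.rpow_one]
  exact le_of_mul_le_mul_left hbound (by positivity)

theorem integral_sub_midpoint_mul_deriv {f f' : ℝ → ℝ} {a b : ℝ} (hab : a ≤ b)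
    (hf : ∀ x ∈ Icc a b, HasDerivAt f (f' x) x) (hf' : IntervalIntegrable f' volume a b) :
    ∫ x in a..b, (x - (a + b) / 2) * f' x = (b - a) / 2 * (f a + f b) - ∫ x in a..b, f x := by
  rw [← uIcc_of_le hab] at hf
  rw [integral_mul_deriv_eq_deriv_mul (fun x _ => (hasDerivAt_id' x).sub_const ((a + b) / 2)) hf
    intervalIntegrable_const hf']
  simp only [one_mul]
  ring

theorem pearce_pecaric_trapezoid (a b : ℝ) (hab : a < b) (q : ℝ) (hq : 1 ≤ q)
    (f f' : ℝ → ℝ)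
    (hf : ∀ x ∈ Set.Icc a b, HasDerivAt f (f' x) x)
    (hint : IntervalIntegrable f' volume a b)
    (hconv : ConvexOn ℝ (Set.Icc a b) (fun x => |f' x| ^ q)) :
    |(f a + f b) / 2 - (1 / (b - a)) * ∫ x in a..b, f x| ≤
      ((b - a) / 4) * ((|f' a| ^ q + |f' b| ^ q) / 2) ^ (1 / q) := by
  set c := (a + b) / 2
  set M := (|f' a| ^ q + |f' b| ^ q) / 2
  have hba : 0 < b - a := sub_pos.2 hab
  have hw : Continuous fun x => |x - c| := by fun_prop
  have hpow_int : IntervalIntegrable (fun x => |f' x| ^ q) volume a b :=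
    hconv.intervalIntegrable_of_nonneg hab.le (fun x _ => by positivity)
      ((Real.continuous_rpow_const (by linarith)).comp_aestronglyMeasurable
        hint.def'.aestronglyMeasurable.norm)
  have hmoment : ∫ x in a..b, |x - c| * |f' x| ^ q ≤ M * ∫ x in a..b, |x - c| := by
    rw [integral_abs_sub_midpoint hab.le]
    exact hconv.integral_abs_sub_midpoint_mul_le hab.le hpow_int
  have hpower_mean : ∫ x in a..b, |x - c| * |f' x| ≤ M ^ (1 / q) * ∫ x in a..b, |x - c| := by
    simp only [integral_of_le hab.le] at hmoment ⊢
    exact integral_mul_le_rpow_mul_integral hq (by positivity) (fun x => abs_nonneg _)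
      (fun x => abs_nonneg _) (hw.intervalIntegrable a b).1
      (hint.abs.continuousOn_mul hw.continuousOn).1
      (hpow_int.continuousOn_mul hw.continuousOn).1 hmoment
  have hparts : (f a + f b) / 2 - (1 / (b - a)) * ∫ x in a..b, f x =
      (∫ x in a..b, (x - c) * f' x) / (b - a) := by
    rw [integral_sub_midpoint_mul_deriv hab.le hf hint]
    field_simp
  calc |(f a + f b) / 2 - (1 / (b - a)) * ∫ x in a..b, f x|
      = |∫ x in a..b, (x - c) * f' x| / (b - a) := by rw [hparts, abs_div, abs_of_pos hba]
    _ ≤ (∫ x in a..b, |x - c| * |f' x|) / (b - a) := by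
        gcongr
        refine (abs_integral_le_integral_abs hab.le).trans_eq ?_
        simp only [abs_mul]
    _ ≤ M ^ (1 / q) * ((b - a) ^ 2 / 4) / (b - a) := by
        rw [← integral_abs_sub_midpoint hab.le]
        gcongr
    _ = (b - a) / 4 * M ^ (1 / q) := by field_simp
end

section
/- If f is differentiable on an open interval containing [a,b] with a < b, q ≥ 1, and |f'|^q is convex on [a,b], then |(1/(b-a)) ∫_a^b f(x) dx − f((a+b)/2)| ≤ ((b-a)/4) · ((|f'(a)|^q + |f'(b)|^q)/2)^{1/q}. -/
/-!
Integrating by parts against the Peano kernel `x - a` on `[a, m]`, `x - b` on `[m, b]`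
(`m = (a + b) / 2`) writes `(b - a) f m - ∫ f` as the integral of the kernel times `f'`.
Convexity bounds `|f'|^q` by its chord, and concavity of `y ↦ y^(1/q)` bounds the `q`-th root of
the chord by its tangent at the midpoint value `c = (|f' a|^q + |f' b|^q) / 2`, so
`|f' x| ≤ c^(1/q) + E (x - m)`. The absolute value of the kernel is symmetric about `m`, so the
linear term integrates to zero, while the kernel itself integrates to `(b - a)^2 / 4`.
-/

open MeasureTheory intervalIntegral Set

lemma Real.rpow_le_tangent {p y c : ℝ} (hp0 : 0 ≤ p) (hp1 : p ≤ 1) (hy : 0 ≤ y) (hc : 0 < c) :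
    y ^ p ≤ c ^ p + p * c ^ (p - 1) * (y - c) := by
  have hyc : 0 ≤ y / c := div_nonneg hy hc.le
  have hbernoulli := rpow_one_add_le_one_add_mul_self (s := y / c - 1) (by linarith) hp0 hp1
  rw [add_sub_cancel] at hbernoulli
  calc y ^ p = c ^ p * (y / c) ^ p := by
        rw [← Real.mul_rpow hc.le hyc, mul_div_cancel₀ _ hc.ne']
    _ ≤ c ^ p * (1 + p * (y / c - 1)) := by gcongr
    _ = c ^ p + p * c ^ (p - 1) * (y - c) := by
        rw [Real.rpow_sub hc, Real.rpow_one]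
        field_simp

lemma ConvexOn.le_secant {f : ℝ → ℝ} {a b x : ℝ} (hf : ConvexOn ℝ (Icc a b) f) (hab : a < b)
    (hx : x ∈ Icc a b) : (b - a) * f x ≤ (b - x) * f a + (x - a) * f b := by
  have hba : 0 < b - a := sub_pos.2 hab
  have h := hf.2 (left_mem_Icc.2 hab.le) (right_mem_Icc.2 hab.le)
    (div_nonneg (sub_nonneg.2 hx.2) hba.le) (div_nonneg (sub_nonneg.2 hx.1) hba.le)
    (by field_simp; ring)
  simp only [smul_eq_mul] at h
  rw [show (b - x) / (b - a) * a + (x - a) / (b - a) * b = x by field_simp; ring] at h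
  calc (b - a) * f x ≤ (b - a) * ((b - x) / (b - a) * f a + (x - a) / (b - a) * f b) := by gcongr
    _ = (b - x) * f a + (x - a) * f b := by field_simp

lemma exists_abs_le_affine_of_convexOn_abs_rpow {g : ℝ → ℝ} {a b q : ℝ} (hab : a < b)
    (hq : 1 ≤ q) (hconv : ConvexOn ℝ (Icc a b) fun x => |g x| ^ q) :
    ∃ E, ∀ x ∈ Icc a b,
      |g x| ≤ ((|g a| ^ q + |g b| ^ q) / 2) ^ (1 / q) + E * (x - (a + b) / 2) := by
  set c := (|g a| ^ q + |g b| ^ q) / 2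
  set s := (|g b| ^ q - |g a| ^ q) / (b - a)
  have hq0 : 0 < q := zero_lt_one.trans_le hq
  have hba : 0 < b - a := sub_pos.2 hab
  have hchord : ∀ x ∈ Icc a b, |g x| ^ q ≤ c + s * (x - (a + b) / 2) := by
    intro x hx
    have h := hconv.le_secant hab hx
    rw [← le_div_iff₀' hba] at h
    refine h.trans_eq ?_
    simp only [c, s]
    field_simp
    ring
  have hroot : ∀ x ∈ Icc a b, |g x| ≤ (c + s * (x - (a + b) / 2)) ^ (1 / q) := by
    intro x hx
    calc |g x| = (|g x| ^ q) ^ (1 / q) := by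
          rw [← Real.rpow_mul (abs_nonneg _), mul_one_div_cancel hq0.ne', Real.rpow_one]
      _ ≤ _ := by gcongr; exact hchord x hx
  rcases (show 0 ≤ c by positivity).eq_or_lt with hc | hc
  · have hs : s = 0 := by
      have ha : 0 ≤ |g a| ^ q := by positivity
      have hb : 0 ≤ |g b| ^ q := by positivity
      have hsum : |g a| ^ q + |g b| ^ q = 0 := by simp only [c] at hc; linarith
      simp only [s, show |g a| ^ q = 0 by linarith, show |g b| ^ q = 0 by linarith, sub_self,
        zero_div]
    refine ⟨0, fun x hx => ?_⟩
    simpa [← hc, hs, Real.zero_rpow (one_div_pos.2 hq0).ne'] using hroot x hx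
  · refine ⟨1 / q * c ^ (1 / q - 1) * s, fun x hx => ?_⟩
    have hchord_nonneg : 0 ≤ c + s * (x - (a + b) / 2) :=
      (by positivity : 0 ≤ |g x| ^ q).trans (hchord x hx)
    calc |g x| ≤ (c + s * (x - (a + b) / 2)) ^ (1 / q) := hroot x hx
      _ ≤ c ^ (1 / q) + 1 / q * c ^ (1 / q - 1) * (c + s * (x - (a + b) / 2) - c) :=
          Real.rpow_le_tangent (by positivity) ((div_le_one hq0).2 hq) hchord_nonneg hc
      _ = c ^ (1 / q) + 1 / q * c ^ (1 / q - 1) * s * (x - (a + b) / 2) := by ring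

lemma integral_midpoint_kernel_mul {φ : ℝ → ℝ} (hφ : Continuous φ) {a b K : ℝ}
    (hsymm : ∀ x, φ x + φ (a + b - x) = 2 * K) :
    (∫ x in a..(a + b) / 2, (x - a) * φ x) + ∫ x in (a + b) / 2..b, (b - x) * φ x =
      K * (b - a) ^ 2 / 4 := by
  have hreflect : ∫ x in (a + b) / 2..b, (b - x) * φ x =
      ∫ x in a..(a + b) / 2, (x - a) * φ (a + b - x) := by
    have h := integral_comp_sub_left (fun y => (b - y) * φ y) (a + b) (a := a) (b := (a + b) / 2)
    rw [show a + b - (a + b) / 2 = (a + b) / 2 by ring, add_sub_cancel_left] at h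
    rw [← h]
    congr 1 with x
    ring
  rw [hreflect, ← intervalIntegral.integral_add]
  · calc _ = ∫ x in a..(a + b) / 2, (x - a) * (2 * K) := by
          congr 1 with x
          rw [← hsymm x]
          ring
      _ = K * (b - a) ^ 2 / 4 := by
          rw [intervalIntegral.integral_mul_const, integral_comp_sub_right (fun x => x),
            integral_id]
          ring
  all_goals exact (by fun_prop : Continuous _).intervalIntegrable _ _

lemma abs_integral_mul_le_integral_mul {w g φ : ℝ → ℝ} {s t : ℝ} (hst : s ≤ t)
    (hw : ContinuousOn w (uIcc s t)) (hg : IntervalIntegrable g volume s t)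
    (hφ : IntervalIntegrable φ volume s t) (hw0 : ∀ x ∈ Icc s t, 0 ≤ w x)
    (hgφ : ∀ x ∈ Icc s t, |g x| ≤ φ x) :
    |∫ x in s..t, w x * g x| ≤ ∫ x in s..t, w x * φ x :=
  calc |∫ x in s..t, w x * g x| ≤ ∫ x in s..t, |w x * g x| := abs_integral_le_integral_abs hst
    _ ≤ ∫ x in s..t, w x * φ x := by
        refine integral_mono_on hst (hg.continuousOn_mul hw).abs (hφ.continuousOn_mul hw)
          fun x hx => ?_
        rw [abs_mul, abs_of_nonneg (hw0 x hx)]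
        exact mul_le_mul_of_nonneg_left (hgφ x hx) (hw0 x hx)

lemma integral_peano_kernel_mul_deriv {f f' : ℝ → ℝ} {a b m : ℝ} (hm : m ∈ Icc a b)
    (hf : ∀ x ∈ Icc a b, HasDerivAt f (f' x) x) (hf' : IntervalIntegrable f' volume a b) :
    (∫ x in a..m, (x - a) * f' x) - ∫ x in m..b, (b - x) * f' x =
      (b - a) * f m - ∫ x in a..b, f x := by
  have hleft : uIcc a m ⊆ Icc a b := by rw [uIcc_of_le hm.1]; exact Icc_subset_Icc le_rfl hm.2
  have hright : uIcc m b ⊆ Icc a b := by rw [uIcc_of_le hm.2]; exact Icc_subset_Icc hm.1 le_rfl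
  have hab : uIcc a b = Icc a b := uIcc_of_le (hm.1.trans hm.2)
  have hfc : ContinuousOn f (Icc a b) := fun x hx => (hf x hx).continuousAt.continuousWithinAt
  have ibp_left := integral_mul_deriv_eq_deriv_mul (fun x _ => (hasDerivAt_id' x).sub_const a)
    (fun x hx => hf x (hleft hx)) intervalIntegrable_const (hf'.mono_set (hab ▸ hleft))
  have ibp_right := integral_mul_deriv_eq_deriv_mul (fun x _ => (hasDerivAt_id' x).const_sub b)
    (fun x hx => hf x (hright hx)) intervalIntegrable_const (hf'.mono_set (hab ▸ hright))
  rw [ibp_left, ibp_right, ← integral_add_adjacent_intervals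
    ((hfc.mono hleft).intervalIntegrable) ((hfc.mono hright).intervalIntegrable)]
  simp only [one_mul, neg_one_mul, intervalIntegral.integral_neg]
  ring

theorem pearce_pecaric_midpoint (a b : ℝ) (hab : a < b) (q : ℝ) (hq : 1 ≤ q)
    (f f' : ℝ → ℝ)
    (hf : ∀ x ∈ Set.Icc a b, HasDerivAt f (f' x) x)
    (hint : IntervalIntegrable f' volume a b)
    (hconv : ConvexOn ℝ (Set.Icc a b) (fun x => |f' x| ^ q)) :
    |(1 / (b - a)) * (∫ x in a..b, f x) - f ((a + b) / 2)| ≤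
      ((b - a) / 4) * ((|f' a| ^ q + |f' b| ^ q) / 2) ^ (1 / q) := by
  obtain ⟨E, hE⟩ := exists_abs_le_affine_of_convexOn_abs_rpow hab hq hconv
  set K := ((|f' a| ^ q + |f' b| ^ q) / 2) ^ (1 / q)
  set m := (a + b) / 2 with hm
  have ham : a ≤ m := by linarith
  have hmb : m ≤ b := by linarith
  have hba : 0 < b - a := sub_pos.2 hab
  have hm_mem : m ∈ uIcc a b := by rw [uIcc_of_le hab.le]; exact ⟨ham, hmb⟩
  have hφ : Continuous fun x => K + E * (x - m) := by fun_prop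
  have hleft : |∫ x in a..m, (x - a) * f' x| ≤ ∫ x in a..m, (x - a) * (K + E * (x - m)) :=
    abs_integral_mul_le_integral_mul ham (by fun_prop : Continuous fun x : ℝ => x - a).continuousOn
      (hint.mono_set (uIcc_subset_uIcc left_mem_uIcc hm_mem)) (hφ.intervalIntegrable _ _)
      (fun x hx => sub_nonneg.2 hx.1) (fun x hx => hE x ⟨hx.1, hx.2.trans hmb⟩)
  have hright : |∫ x in m..b, (b - x) * f' x| ≤ ∫ x in m..b, (b - x) * (K + E * (x - m)) :=
    abs_integral_mul_le_integral_mul hmb (by fun_prop : Continuous fun x : ℝ => b - x).continuousOn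
      (hint.mono_set (uIcc_subset_uIcc hm_mem right_mem_uIcc)) (hφ.intervalIntegrable _ _)
      (fun x hx => sub_nonneg.2 hx.2) (fun x hx => hE x ⟨ham.trans hx.1, hx.2⟩)
  have hkernel := integral_midpoint_kernel_mul hφ (a := a) (b := b) (K := K) (fun x => by ring)
  have hpeano := integral_peano_kernel_mul_deriv ⟨ham, hmb⟩ hf hint
  calc |1 / (b - a) * (∫ x in a..b, f x) - f m|
      = |(∫ x in a..m, (x - a) * f' x) - ∫ x in m..b, (b - x) * f' x| / (b - a) := by
        rw [hpeano, ← abs_of_pos hba, ← abs_div, abs_of_pos hba, ← abs_neg]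
        congr 1
        field_simp
        ring
    _ ≤ (|∫ x in a..m, (x - a) * f' x| + |∫ x in m..b, (b - x) * f' x|) / (b - a) := by
        gcongr
        exact abs_sub _ _
    _ ≤ ((∫ x in a..m, (x - a) * (K + E * (x - m))) +
          ∫ x in m..b, (b - x) * (K + E * (x - m))) / (b - a) := by gcongr
    _ = (b - a) / 4 * K := by
        rw [hkernel]
        field_simp
end

section
/- Let c > 0 and f differentiable on an open interval containing [a, a+c] with integrable derivative. Then ∫_0^{1/2} t·f'(a+tc) dt + ∫_{1/2}^1 (t-1)·f'(a+tc) dt = (1/c)·f(a + c/2) − (1/c²) ∫_a^{a+c} f(x) dx. -/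
open MeasureTheory intervalIntegral

/-!
Substituting `x = a + t c` turns the left-hand side into `c⁻²` times
`∫_a^m (x - a) f' x dx + ∫_m^b (x - b) f' x dx` with `m = a + c/2` and `b = a + c`.
Integrating each piece by parts, the boundary terms at `a` and `b` vanish, the two boundary
terms at `m` add up to `(b - a) f(m)`, and the two remaining integrals of `f` combine to
`∫_a^b f`.
-/

theorem integral_sub_mul_deriv_eq_s9 {f f' : ℝ → ℝ} {a b : ℝ} (p : ℝ)
    (hf : ∀ x ∈ Set.uIcc a b, HasDerivAt f (f' x) x) (hf' : IntervalIntegrable f' volume a b) :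
    ∫ x in a..b, (x - p) * f' x = (b - p) * f b - (a - p) * f a - ∫ x in a..b, f x := by
  simpa using integral_mul_deriv_eq_deriv_mul (fun x _ => (hasDerivAt_id x).sub_const p) hf
    intervalIntegrable_const hf'

theorem integral_peano_kernel_eq {f f' : ℝ → ℝ} {a m b : ℝ} (ham : a ≤ m) (hmb : m ≤ b)
    (hf : ∀ x ∈ Set.Icc a b, HasDerivAt f (f' x) x) (hf' : IntervalIntegrable f' volume a b) :
    (∫ x in a..m, (x - a) * f' x) + (∫ x in m..b, (x - b) * f' x) =
      (b - a) * f m - ∫ x in a..b, f x := by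
  have hm : m ∈ Set.uIcc a b := Set.mem_uIcc_of_le ham hmb
  have hleft : Set.uIcc a m ⊆ Set.uIcc a b := Set.uIcc_subset_uIcc_left hm
  have hright : Set.uIcc m b ⊆ Set.uIcc a b := Set.uIcc_subset_uIcc_right hm
  have hf_uIcc : ∀ x ∈ Set.uIcc a b, HasDerivAt f (f' x) x := by
    rwa [Set.uIcc_of_le (ham.trans hmb)]
  have hcont : ContinuousOn f (Set.uIcc a b) :=
    fun x hx => (hf_uIcc x hx).continuousAt.continuousWithinAt
  rw [integral_sub_mul_deriv_eq_s9 a (fun x hx => hf_uIcc x (hleft hx)) (hf'.mono_set hleft),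
    integral_sub_mul_deriv_eq_s9 b (fun x hx => hf_uIcc x (hright hx)) (hf'.mono_set hright),
    ← integral_add_adjacent_intervals ((hcont.mono hleft).intervalIntegrable)
      ((hcont.mono hright).intervalIntegrable)]
  ring

theorem integral_sub_mul_comp_add_mul (φ : ℝ → ℝ) {c : ℝ} (hc : c ≠ 0) (a p α β : ℝ) :
    ∫ t in α..β, (t - p) * φ (a + t * c) =
      (c ^ 2)⁻¹ * ∫ x in a + α * c..a + β * c, (x - (a + p * c)) * φ x := by
  have hrescale : ∀ t,
      (t - p) * φ (a + t * c) = c⁻¹ * ((a + c * t - (a + p * c)) * φ (a + c * t)) := by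
    intro t
    rw [mul_comm c t]
    field_simp
    ring
  simp_rw [hrescale, intervalIntegral.integral_const_mul,
    integral_comp_add_mul (fun x => (x - (a + p * c)) * φ x) hc a, smul_eq_mul,
    mul_comm c α, mul_comm c β]
  ring

theorem midpoint_identity_shift (a c : ℝ) (hc : 0 < c) (f f' : ℝ → ℝ)
    (hf : ∀ x ∈ Set.Icc a (a + c), HasDerivAt f (f' x) x)
    (hint : IntervalIntegrable f' volume a (a + c)) :
    (∫ t in (0:ℝ)..(1/2), t * f' (a + t * c)) +
      (∫ t in (1/2:ℝ)..1, (t - 1) * f' (a + t * c)) =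
      (1 / c) * f (a + c / 2) - (1 / c ^ 2) * ∫ x in a..(a + c), f x := by
  have hleft := integral_sub_mul_comp_add_mul f' hc.ne' a 0 0 (1 / 2)
  have hright := integral_sub_mul_comp_add_mul f' hc.ne' a 1 (1 / 2) 1
  have hkernel := integral_peano_kernel_eq (m := a + c / 2) (by linarith) (by linarith) hf hint
  simp only [sub_zero, zero_mul, add_zero, one_mul] at hleft hright
  rw [hleft, hright, ← mul_add, show a + 1 / 2 * c = a + c / 2 by ring, hkernel]
  field_simp
  ring
end

section
/- Let c > 0, f differentiable on an open interval containing [a, a+c] with integrable derivative, and suppose A, B ≥ 0 satisfy |f'(a+tc)| ≤ (1-t)·A + t·B for all t ∈ [0,1]. Then |(1/c) ∫_a^{a+c} f(x) dx − (f(a)+f(a+c))/2| ≤ (c/8)·(A + B). -/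
open MeasureTheory intervalIntegral Set
open scoped Interval

/-! Integrating by parts against the kernel `(a + b) / 2 - x` turns the trapezoid error into
`∫ ((a + b) / 2 - x) f'(x) dx`. Bounding `|f'|` by the affine majorant `(1 - t) A + t B` leaves
`∫ |(a + b) / 2 - x| ((1 - t) A + t B) dx`; the reflection `x ↦ a + b - x` swaps the two weights,
so this is `(A + B) / 2 · ∫ |(a + b) / 2 - x| dx = (b - a)² (A + B) / 8`. -/

section

variable {f f' : ℝ → ℝ} {a b : ℝ}

theorem integral_sub_trapezoid_eq_integral_mul_deriv
    (hf : ∀ x ∈ uIcc a b, HasDerivAt f (f' x) x) (hf' : IntervalIntegrable f' volume a b) :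
    (∫ x in a..b, f x) - (b - a) / 2 * (f a + f b) =
      ∫ x in a..b, ((a + b) / 2 - x) * f' x := by
  rw [integral_mul_deriv_eq_deriv_mul (fun x _ => (hasDerivAt_id' x).const_sub ((a + b) / 2)) hf
    intervalIntegrable_const hf']
  simp only [neg_one_mul, intervalIntegral.integral_neg]
  ring

theorem abs_integral_sub_trapezoid_le (hab : a ≤ b)
    (hf : ∀ x ∈ Icc a b, HasDerivAt f (f' x) x) (hf' : IntervalIntegrable f' volume a b)
    {w : ℝ → ℝ} (hw : IntervalIntegrable w volume a b) (hf'w : ∀ x ∈ Icc a b, |f' x| ≤ w x) :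
    |(∫ x in a..b, f x) - (b - a) / 2 * (f a + f b)| ≤
      ∫ x in a..b, |(a + b) / 2 - x| * w x := by
  rw [integral_sub_trapezoid_eq_integral_mul_deriv (by rwa [uIcc_of_le hab]) hf',
    ← Real.norm_eq_abs]
  refine norm_integral_le_of_norm_le hab ?_
    (hw.continuousOn_mul (g := fun x => |(a + b) / 2 - x|) (by fun_prop))
  refine ae_of_all _ fun x hx => ?_
  rw [norm_mul, Real.norm_eq_abs, Real.norm_eq_abs]
  exact mul_le_mul_of_nonneg_left (hf'w x (Ioc_subset_Icc_self hx)) (abs_nonneg _)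

theorem integral_abs_midpoint_sub (hab : a ≤ b) :
    ∫ x in a..b, |(a + b) / 2 - x| = (b - a) ^ 2 / 4 := by
  set m := (a + b) / 2 with hm
  have half : ∀ c, ∫ x in Ι m c, |m - x| = (c - m) ^ 2 / 2 := fun c => by
    simpa [abs_sub_comm, sq_abs, one_add_one_eq_two] using
      integral_pow_abs_sub_uIoc (a := m) (b := c) 1
  have ham : a ≤ m := by linarith
  have hmb : m ≤ b := by linarith
  have hint : Continuous fun x => |m - x| := by fun_prop
  rw [← integral_add_adjacent_intervals (hint.intervalIntegrable a m) (hint.intervalIntegrable m b),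
    integral_of_le ham, integral_of_le hmb, ← uIoc_of_le ham, ← uIoc_of_le hmb, uIoc_comm,
    half, half]
  ring

theorem integral_abs_midpoint_sub_mul_affine (hab : a < b) (A B : ℝ) :
    ∫ x in a..b, |(a + b) / 2 - x| * ((1 - (x - a) / (b - a)) * A + (x - a) / (b - a) * B) =
      (b - a) ^ 2 / 8 * (A + B) := by
  set g : ℝ → ℝ → ℝ → ℝ := fun A B x =>
    |(a + b) / 2 - x| * ((1 - (x - a) / (b - a)) * A + (x - a) / (b - a) * B) with hg
  have hba : b - a ≠ 0 := sub_ne_zero.2 hab.ne'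
  have reflect : ∫ x in a..b, g A B x = ∫ x in a..b, g B A x := by
    have := integral_comp_sub_left (a := a) (b := b) (g A B) (a + b)
    simp only [add_sub_cancel_left, add_sub_cancel_right] at this
    rw [← this]
    refine integral_congr fun x _ => ?_
    simp only [hg]
    rw [show (a + b) / 2 - (a + b - x) = -((a + b) / 2 - x) by ring, abs_neg]
    field_simp
    ring
  have hcont : ∀ A B, Continuous (g A B) := fun A B => by fun_prop
  have sum : (∫ x in a..b, g A B x) + ∫ x in a..b, g B A x = (b - a) ^ 2 / 4 * (A + B) := by
    rw [← integral_add ((hcont A B).intervalIntegrable a b) ((hcont B A).intervalIntegrable a b),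
      ← integral_abs_midpoint_sub hab.le, ← intervalIntegral.integral_mul_const]
    refine integral_congr fun x _ => ?_
    simp only [hg]
    ring
  change (∫ x in a..b, g A B x) = _
  linarith

end

theorem phi_convex_trapezoid_general (a c A B : ℝ) (hc : 0 < c)
    (f f' : ℝ → ℝ)
    (hf : ∀ x ∈ Set.Icc a (a + c), HasDerivAt f (f' x) x)
    (hint : IntervalIntegrable f' volume a (a + c))
    (hbound : ∀ t ∈ Set.Icc (0:ℝ) 1, |f' (a + t * c)| ≤ (1 - t) * A + t * B) :
    |(1 / c) * (∫ x in a..(a + c), f x) - (f a + f (a + c)) / 2| ≤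
      (c / 8) * (A + B) := by
  have hlt : a < a + c := lt_add_of_pos_right a hc
  have hf'le : ∀ x ∈ Icc a (a + c),
      |f' x| ≤ (1 - (x - a) / (a + c - a)) * A + (x - a) / (a + c - a) * B := by
    rintro x ⟨hax, hxb⟩
    have ht : (x - a) / (a + c - a) ∈ Icc (0 : ℝ) 1 := by
      rw [add_sub_cancel_left, mem_Icc, le_div_iff₀ hc, div_le_iff₀ hc]
      constructor <;> linarith
    simpa [add_sub_cancel_left, div_mul_cancel₀ _ hc.ne'] using hbound _ ht
  have key := abs_integral_sub_trapezoid_le hlt.le hf hint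
    (Continuous.intervalIntegrable (by fun_prop) _ _) hf'le
  rw [integral_abs_midpoint_sub_mul_affine hlt, add_sub_cancel_left] at key
  rw [show (1 / c) * (∫ x in a..(a + c), f x) - (f a + f (a + c)) / 2 =
      ((∫ x in a..(a + c), f x) - c / 2 * (f a + f (a + c))) / c by field_simp,
    abs_div, abs_of_pos hc, div_le_iff₀ hc]
  linarith

theorem phi_convex_trapezoid (a c A B : ℝ) (hc : 0 < c) (hA : 0 ≤ A) (hB : 0 ≤ B)
    (f f' : ℝ → ℝ)
    (hf : ∀ x ∈ Set.Icc a (a + c), HasDerivAt f (f' x) x)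
    (hint : IntervalIntegrable f' volume a (a + c))
    (hbound : ∀ t ∈ Set.Icc (0:ℝ) 1, |f' (a + t * c)| ≤ (1 - t) * A + t * B) :
    |(1 / c) * (∫ x in a..(a + c), f x) - (f a + f (a + c)) / 2| ≤
      (c / 8) * (A + B) :=
  phi_convex_trapezoid_general a c A B hc f f' hf hint hbound
end

section
/- Let c > 0, q ≥ 1, f differentiable on an open interval containing [a, a+c] with integrable derivative, and suppose A, B ≥ 0 satisfy |f'(a+tc)|^q ≤ (1-t)·A^q + t·B^q for all t ∈ [0,1]. Then |(1/c) ∫_a^{a+c} f(x) dx − f(a + c/2)| ≤ (c/8)·[((2A^q + B^q)/3)^{1/q} + ((A^q + 2B^q)/3)^{1/q}]. -/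
/-!
Integrating by parts on the two halves of `[a, a + c]` expresses `∫ f - c f(m)`, `m = a + c/2`,
through `f'` against the Peano kernel, which is `x - a` on the left half and `a + c - x` on the
right half. The hypothesis says `|f'| ≤ h ^ (1/q)` for the affine function `h` interpolating
`A ^ q` and `B ^ q`. As `t ↦ t ^ (1/q)` is concave, Jensen's inequality (via its tangent line at
the weighted mean) bounds `∫ w |f'|` by `(∫ w) * (mean of h) ^ (1/q)` for either kernel `w`, and
the mean of an affine function against a linear weight is its value at the barycentre of the
weight: `(2 A ^ q + B ^ q) / 3` on the left half and `(A ^ q + 2 B ^ q) / 3` on the right.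
-/

open MeasureTheory intervalIntegral Set

theorem rpow_le_rpow_add_mul_sub {p u u₀ : ℝ} (hp0 : 0 ≤ p) (hp1 : p ≤ 1) (hu : 0 ≤ u)
    (hu₀ : 0 < u₀) : u ^ p ≤ u₀ ^ p + p * u₀ ^ (p - 1) * (u - u₀) := by
  have hbern := rpow_one_add_le_one_add_mul_self (s := u / u₀ - 1)
    (by linarith [div_nonneg hu hu₀.le]) hp0 hp1
  rw [add_sub_cancel, Real.div_rpow hu hu₀.le, div_le_iff₀ (by positivity)] at hbern
  rw [Real.rpow_sub_one hu₀.ne']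
  calc u ^ p ≤ (1 + p * (u / u₀ - 1)) * u₀ ^ p := hbern
    _ = _ := by field_simp

theorem integral_sub_mul_affine (l r α β : ℝ) :
    ∫ x in l..r, (x - l) * (α + β * (x - l)) =
      (r - l) ^ 2 / 2 * (α + β * (2 * (r - l) / 3)) := by
  rw [integral_comp_sub_right (fun x => x * (α + β * x)), sub_self]
  simp only [mul_add, mul_left_comm _ β, ← pow_two]
  rw [intervalIntegral.integral_add ((continuous_mul_const α).intervalIntegrable _ _)
    ((by fun_prop : Continuous fun x : ℝ => β * x ^ 2).intervalIntegrable _ _)]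
  simp only [intervalIntegral.integral_mul_const, intervalIntegral.integral_const_mul,
    integral_id, integral_pow]
  ring

section PowerMean

variable {q u₀ l r : ℝ} {w h φ : ℝ → ℝ}

theorem integral_mul_abs_le_of_rpow_le_of_pos (hq : 1 ≤ q) (hlr : l ≤ r) (hu₀ : 0 < u₀)
    (hw : Continuous w) (hh : Continuous h) (hφ : IntervalIntegrable φ volume l r)
    (hw0 : ∀ x ∈ Icc l r, 0 ≤ w x) (hφh : ∀ x ∈ Icc l r, |φ x| ^ q ≤ h x)
    (hwh : ∫ x in l..r, w x * h x = (∫ x in l..r, w x) * u₀) :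
    ∫ x in l..r, w x * |φ x| ≤ (∫ x in l..r, w x) * u₀ ^ (1 / q) := by
  have hq0 : 0 < q := by linarith
  set p := 1 / q with hp
  set s := p * u₀ ^ (p - 1)
  have htangent : ∀ x ∈ Icc l r, |φ x| ≤ u₀ ^ p + s * (h x - u₀) := fun x hx => by
    have hhx : 0 ≤ h x := (Real.rpow_nonneg (abs_nonneg _) q).trans (hφh x hx)
    calc |φ x| ≤ h x ^ p := by
          rw [hp, one_div, Real.le_rpow_inv_iff_of_pos (abs_nonneg _) hhx hq0]
          exact hφh x hx
      _ ≤ _ := mul_assoc p _ _ ▸ rpow_le_rpow_add_mul_sub (by positivity)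
          ((div_le_one hq0).2 hq) hhx hu₀
  have hwi : IntervalIntegrable w volume l r := hw.intervalIntegrable l r
  have hwhi : IntervalIntegrable (fun x => w x * h x) volume l r :=
    (hw.mul hh).intervalIntegrable l r
  calc ∫ x in l..r, w x * |φ x|
      ≤ ∫ x in l..r, (u₀ ^ p - s * u₀) * w x + s * (w x * h x) := by
        refine integral_mono_on hlr (hφ.abs.continuousOn_mul hw.continuousOn)
          ((hwi.const_mul _).add (hwhi.const_mul _)) fun x hx => ?_
        nlinarith [mul_le_mul_of_nonneg_left (htangent x hx) (hw0 x hx)]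
    _ = (∫ x in l..r, w x) * u₀ ^ p := by
        rw [intervalIntegral.integral_add (hwi.const_mul _) (hwhi.const_mul _),
          intervalIntegral.integral_const_mul, intervalIntegral.integral_const_mul, hwh]
        ring

theorem integral_mul_abs_le_of_rpow_le (hq : 1 ≤ q) (hlr : l ≤ r) (hu₀ : 0 ≤ u₀)
    (hw : Continuous w) (hh : Continuous h) (hφ : IntervalIntegrable φ volume l r)
    (hw0 : ∀ x ∈ Icc l r, 0 ≤ w x) (hφh : ∀ x ∈ Icc l r, |φ x| ^ q ≤ h x)
    (hwh : ∫ x in l..r, w x * h x = (∫ x in l..r, w x) * u₀) :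
    ∫ x in l..r, w x * |φ x| ≤ (∫ x in l..r, w x) * u₀ ^ (1 / q) := by
  have hwi : IntervalIntegrable w volume l r := hw.intervalIntegrable l r
  have hbound : ∀ ε > 0,
      ∫ x in l..r, w x * |φ x| ≤ (∫ x in l..r, w x) * (u₀ + ε) ^ (1 / q) :=
    fun ε hε => integral_mul_abs_le_of_rpow_le_of_pos (h := fun x => h x + ε) hq hlr
      (by positivity) hw (hh.add continuous_const) hφ hw0
      (fun x hx => (hφh x hx).trans (by linarith)) (by
        simp only [mul_add]
        rw [intervalIntegral.integral_add (f := fun x => w x * h x)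
          ((hw.mul hh).intervalIntegrable l r) (hwi.mul_const ε),
          intervalIntegral.integral_mul_const, hwh])
  have hcont : Continuous fun ε => (∫ x in l..r, w x) * (u₀ + ε) ^ (1 / q) :=
    continuous_const.mul ((continuous_const.add continuous_id).rpow_const fun _ =>
      Or.inr (by positivity))
  have hlim := (hcont.tendsto 0).mono_left (nhdsWithin_le_nhds (s := Ioi 0))
  rw [add_zero] at hlim
  exact ge_of_tendsto hlim (eventually_nhdsWithin_of_forall hbound)

end PowerMean

section AffineBound

variable {q l r α β : ℝ} {φ : ℝ → ℝ}

theorem abs_integral_dist_left_mul_le (hq : 1 ≤ q) (hlr : l ≤ r)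
    (hφ : IntervalIntegrable φ volume l r)
    (hφα : ∀ x ∈ Icc l r, |φ x| ^ q ≤ α + β * (x - l)) :
    |∫ x in l..r, (x - l) * φ x| ≤
      (r - l) ^ 2 / 2 * (α + β * (2 * (r - l) / 3)) ^ (1 / q) := by
  have hα : 0 ≤ α := by
    simpa using (Real.rpow_nonneg (abs_nonneg _) q).trans (hφα l ⟨le_rfl, hlr⟩)
  have hαβ : 0 ≤ α + β * (r - l) :=
    (Real.rpow_nonneg (abs_nonneg _) q).trans (hφα r ⟨hlr, le_rfl⟩)
  have hW : ∫ x in l..r, (x - l) = (r - l) ^ 2 / 2 := by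
    simpa using integral_sub_mul_affine l r 1 0
  calc |∫ x in l..r, (x - l) * φ x|
      ≤ ∫ x in l..r, |(x - l) * φ x| := abs_integral_le_integral_abs hlr
    _ = ∫ x in l..r, (x - l) * |φ x| := integral_congr fun x hx => by
        rw [uIcc_of_le hlr] at hx
        rw [abs_mul, abs_of_nonneg (sub_nonneg.2 hx.1)]
    _ ≤ (∫ x in l..r, (x - l)) * (α + β * (2 * (r - l) / 3)) ^ (1 / q) :=
        integral_mul_abs_le_of_rpow_le (w := fun x => x - l) hq hlr (by nlinarith)
          (by fun_prop) (by fun_prop) hφ (fun x hx => sub_nonneg.2 hx.1) hφα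
          (by rw [integral_sub_mul_affine, hW])
    _ = _ := by rw [hW]

theorem abs_integral_dist_right_mul_le (hq : 1 ≤ q) (hlr : l ≤ r)
    (hφ : IntervalIntegrable φ volume l r)
    (hφα : ∀ x ∈ Icc l r, |φ x| ^ q ≤ α + β * (r - x)) :
    |∫ x in l..r, (r - x) * φ x| ≤
      (r - l) ^ 2 / 2 * (α + β * (2 * (r - l) / 3)) ^ (1 / q) := by
  have hreflect : ∫ x in l..r, (x - l) * φ (l + r - x) = ∫ x in l..r, (r - x) * φ x := by
    convert integral_comp_sub_left (fun y => (r - y) * φ y) (l + r) (a := l) (b := r) using 1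
    · congr 1
      ext x
      ring_nf
    · simp
  rw [← hreflect]
  refine abs_integral_dist_left_mul_le hq hlr (by simpa using hφ.symm.comp_sub_left (l + r))
    fun x hx => ?_
  convert hφα (l + r - x) ⟨by linarith [hx.2], by linarith [hx.1]⟩ using 3
  ring

end AffineBound

theorem integral_eq_mul_sub_integral_peano {f f' : ℝ → ℝ} {a b m : ℝ} (hm : m ∈ Icc a b)
    (hf : ∀ x ∈ Icc a b, HasDerivAt f (f' x) x) (hf' : IntervalIntegrable f' volume a b) :
    ∫ x in a..b, f x =
      (b - a) * f m - (∫ x in a..m, (x - a) * f' x) + ∫ x in m..b, (b - x) * f' x := by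
  have hab : uIcc a b = Icc a b := uIcc_of_le (hm.1.trans hm.2)
  have ham : uIcc a m ⊆ Icc a b := uIcc_of_le hm.1 ▸ Icc_subset_Icc_right hm.2
  have hmb : uIcc m b ⊆ Icc a b := uIcc_of_le hm.2 ▸ Icc_subset_Icc_left hm.1
  have hfc : ContinuousOn f (Icc a b) := fun x hx => (hf x hx).continuousAt.continuousWithinAt
  have hleft := integral_mul_deriv_eq_deriv_mul (fun x _ => (hasDerivAt_id x).sub_const a)
    (fun x hx => hf x (ham hx)) intervalIntegrable_const (hf'.mono_set (hab ▸ ham))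
  have hright := integral_mul_deriv_eq_deriv_mul (fun x _ => (hasDerivAt_id x).const_sub b)
    (fun x hx => hf x (hmb hx)) intervalIntegrable_const (hf'.mono_set (hab ▸ hmb))
  rw [← integral_add_adjacent_intervals (hfc.mono ham).intervalIntegrable
    (hfc.mono hmb).intervalIntegrable]
  simp only [id, sub_self, zero_mul, one_mul, neg_one_mul, intervalIntegral.integral_neg]
    at hleft hright
  linarith

theorem abs_integral_sub_mul_midpoint_le {f f' : ℝ → ℝ} {a c q α β : ℝ} (hc : 0 ≤ c)
    (hq : 1 ≤ q) (hf : ∀ x ∈ Icc a (a + c), HasDerivAt f (f' x) x)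
    (hf' : IntervalIntegrable f' volume a (a + c))
    (hf'α : ∀ x ∈ Icc a (a + c), |f' x| ^ q ≤ α + β * (x - a)) :
    |(∫ x in a..a + c, f x) - c * f (a + c / 2)| ≤
      c ^ 2 / 8 * ((α + β * (c / 3)) ^ (1 / q) + (α + β * (2 * c / 3)) ^ (1 / q)) := by
  have hm : a + c / 2 ∈ Icc a (a + c) := ⟨by linarith, by linarith⟩
  have hmem : a + c / 2 ∈ uIcc a (a + c) := Icc_subset_uIcc hm
  have hleft := abs_integral_dist_left_mul_le hq hm.1
    (hf'.mono_set (uIcc_subset_uIcc left_mem_uIcc hmem))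
    fun x hx => hf'α x ⟨hx.1, hx.2.trans hm.2⟩
  have hright := abs_integral_dist_right_mul_le (α := α + β * c) (β := -β) hq hm.2
    (hf'.mono_set (uIcc_subset_uIcc hmem right_mem_uIcc))
    fun x hx => (hf'α x ⟨hm.1.trans hx.1, hx.2⟩).trans_eq (by ring)
  rw [integral_eq_mul_sub_integral_peano hm hf hf']
  set I₁ := ∫ x in a..a + c / 2, (x - a) * f' x
  set I₂ := ∫ x in a + c / 2..a + c, (a + c - x) * f' x
  calc _ = |I₂ - I₁| := by ring_nf
    _ ≤ |I₂| + |I₁| := abs_sub _ _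
    _ ≤ _ := by
        grw [hleft, hright]
        apply le_of_eq
        ring_nf

theorem phi_convex_midpoint_power_mean_general (a c A B q : ℝ) (hc : 0 < c) (hq : 1 ≤ q)
    (f f' : ℝ → ℝ)
    (hf : ∀ x ∈ Set.Icc a (a + c), HasDerivAt f (f' x) x)
    (hint : IntervalIntegrable f' volume a (a + c))
    (hbound : ∀ t ∈ Set.Icc (0:ℝ) 1,
      |f' (a + t * c)| ^ q ≤ (1 - t) * A ^ q + t * B ^ q) :
    |(1 / c) * (∫ x in a..(a + c), f x) - f (a + c / 2)| ≤
      (c / 8) * (((2 * A ^ q + B ^ q) / 3) ^ (1 / q) +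
        ((A ^ q + 2 * B ^ q) / 3) ^ (1 / q)) := by
  have haffine : ∀ x ∈ Icc a (a + c), |f' x| ^ q ≤ A ^ q + (B ^ q - A ^ q) / c * (x - a) := by
    intro x hx
    convert hbound ((x - a) / c) ⟨div_nonneg (by linarith [hx.1]) hc.le,
      (div_le_one hc).2 (by linarith [hx.2])⟩ using 1
    · rw [div_mul_cancel₀ _ hc.ne', add_sub_cancel]
    · field_simp
      ring
  have hmidpoint := abs_integral_sub_mul_midpoint_le hc.le hq hf hint haffine
  rw [show A ^ q + (B ^ q - A ^ q) / c * (c / 3) = (2 * A ^ q + B ^ q) / 3 by field_simp; ring,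
    show A ^ q + (B ^ q - A ^ q) / c * (2 * c / 3) = (A ^ q + 2 * B ^ q) / 3 by field_simp; ring]
    at hmidpoint
  rw [show 1 / c * (∫ x in a..a + c, f x) - f (a + c / 2) =
      1 / c * ((∫ x in a..a + c, f x) - c * f (a + c / 2)) by field_simp,
    abs_mul, abs_of_pos (one_div_pos.2 hc)]
  grw [hmidpoint]
  apply le_of_eq
  field_simp

theorem phi_convex_midpoint_power_mean (a c A B q : ℝ) (hc : 0 < c) (hq : 1 ≤ q)
    (hA : 0 ≤ A) (hB : 0 ≤ B) (f f' : ℝ → ℝ)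
    (hf : ∀ x ∈ Set.Icc a (a + c), HasDerivAt f (f' x) x)
    (hint : IntervalIntegrable f' volume a (a + c))
    (hbound : ∀ t ∈ Set.Icc (0:ℝ) 1,
      |f' (a + t * c)| ^ q ≤ (1 - t) * A ^ q + t * B ^ q) :
    |(1 / c) * (∫ x in a..(a + c), f x) - f (a + c / 2)| ≤
      (c / 8) * (((2 * A ^ q + B ^ q) / 3) ^ (1 / q) +
        ((A ^ q + 2 * B ^ q) / 3) ^ (1 / q)) :=
  phi_convex_midpoint_power_mean_general a c A B q hc hq f f' hf hint hbound
end

section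
/- Let c > 0, q ≥ 1, f differentiable on an open interval containing [a, a+c] with integrable derivative, and suppose A, B ≥ 0 satisfy |f'(a+tc)|^q ≤ (1-t)·A^q + t·B^q for all t ∈ [0,1]. Then |(1/c) ∫_a^{a+c} f(x) dx − f(a + c/2)| ≤ (c/8)·((2^{1/q}+1)/3^{1/q})·(A + B). -/
/-!
Rescaling `x = a + c t` reduces the theorem to `a = 0`, `c = 1`, with `A, B` replaced by
`c A, c B`. Integrating by parts on each half of `[0, 1]` and reflecting the right half by
`t ↦ 1 - t` gives `∫₀¹ g - g (1/2) = ∫₀^{1/2} t g' (1 - t) - ∫₀^{1/2} t g' t`, where the reflected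
derivative satisfies the same hypothesis with `A` and `B` exchanged. On `[0, 1/2]`, Hölder's
inequality for the weight `t` bounds `|∫ t h t|` by
`(∫ t)^(1 - 1/q) (∫ t ((1 - t) A^q + t B^q))^(1/q) = 1/8 ((2 A^q + B^q) / 3)^(1/q)`, and
subadditivity of `x ↦ x^(1/q)` bounds the last factor by `(2^(1/q) A + B) / 3^(1/q)`.
-/

open MeasureTheory intervalIntegral Set

theorem MeasureTheory.Integrable.memLp_rpow {α : Type*} [MeasurableSpace α] {μ : Measure α}
    {u : α → ℝ} {r : ℝ} (hr : 0 < r) (hu : Integrable u μ) (hu0 : 0 ≤ᵐ[μ] u) :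
    MemLp (fun x => u x ^ r) (ENNReal.ofReal r⁻¹) μ := by
  have hmeas : AEStronglyMeasurable (fun x => u x ^ r) μ :=
    (hu.aestronglyMeasurable.aemeasurable.pow_const r).aestronglyMeasurable
  rw [← integrable_norm_rpow_iff hmeas (by simpa using hr) ENNReal.ofReal_ne_top,
    ENNReal.toReal_ofReal (by positivity)]
  refine hu.congr ?_
  filter_upwards [hu0] with x hx
  rw [Real.norm_of_nonneg (Real.rpow_nonneg hx r), Real.rpow_rpow_inv hx hr.ne']

/-- Hölder's inequality for the exponents `1 / (1 - s)` and `1 / s`, applied to `u ^ (1 - s)` and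
`(u * g) ^ s`. -/
theorem MeasureTheory.integral_mul_rpow_le {α : Type*} [MeasurableSpace α] {μ : Measure α}
    {u g : α → ℝ} {s : ℝ} (hs0 : 0 < s) (hs1 : s ≤ 1) (hu : Integrable u μ)
    (hug : Integrable (fun x => u x * g x) μ) (hu0 : 0 ≤ᵐ[μ] u) (hg0 : 0 ≤ᵐ[μ] g) :
    ∫ x, u x * g x ^ s ∂μ ≤ (∫ x, u x ∂μ) ^ (1 - s) * (∫ x, u x * g x ∂μ) ^ s := by
  rcases hs1.eq_or_lt with rfl | hs1
  · simp
  have hug0 : 0 ≤ᵐ[μ] fun x => u x * g x := by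
    filter_upwards [hu0, hg0] with x hux hgx using mul_nonneg hux hgx
  have holder := integral_mul_le_Lp_mul_Lq_of_nonneg
    (Real.HolderConjugate.one_sub_inv_inv hs0 hs1)
    (hu0.mono fun x hx => Real.rpow_nonneg hx (1 - s))
    (hug0.mono fun x hx => Real.rpow_nonneg hx s)
    (by simpa using hu.memLp_rpow (sub_pos.2 hs1) hu0) (by simpa using hug.memLp_rpow hs0 hug0)
  simp only [one_div, inv_inv] at holder
  have hlhs : ∫ x, u x * g x ^ s ∂μ = ∫ x, u x ^ (1 - s) * (u x * g x) ^ s ∂μ := by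
    refine integral_congr_ae ?_
    filter_upwards [hu0, hg0] with x hux hgx
    rw [Real.mul_rpow hux hgx, ← mul_assoc,
      ← Real.rpow_add_of_nonneg hux (sub_pos.2 hs1).le hs0.le, sub_add_cancel, Real.rpow_one]
  have hu_eq : ∫ x, (u x ^ (1 - s)) ^ (1 - s)⁻¹ ∂μ = ∫ x, u x ∂μ :=
    integral_congr_ae (hu0.mono fun x hx => Real.rpow_rpow_inv hx (sub_pos.2 hs1).ne')
  have hug_eq : ∫ x, ((u x * g x) ^ s) ^ s⁻¹ ∂μ = ∫ x, u x * g x ∂μ :=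
    integral_congr_ae (hug0.mono fun x hx => Real.rpow_rpow_inv hx hs0.ne')
  rwa [hlhs, ← hu_eq, ← hug_eq]

namespace intervalIntegral

theorem abs_integral_mul_le_rpow {α β s : ℝ} {w G h : ℝ → ℝ} (hαβ : α ≤ β) (hs0 : 0 < s)
    (hs1 : s ≤ 1) (hw : ContinuousOn w (Icc α β)) (hG : ContinuousOn G (Icc α β))
    (hh : IntervalIntegrable h volume α β) (hw0 : ∀ x ∈ Icc α β, 0 ≤ w x)
    (hG0 : ∀ x ∈ Icc α β, 0 ≤ G x) (hhG : ∀ x ∈ Icc α β, |h x| ≤ G x ^ s) :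
    |∫ x in α..β, w x * h x| ≤ (∫ x in α..β, w x) ^ (1 - s) * (∫ x in α..β, w x * G x) ^ s := by
  have hw' : ContinuousOn w (uIcc α β) := by rwa [uIcc_of_le hαβ]
  have hwGs : ContinuousOn (fun x => w x * G x ^ s) (Icc α β) :=
    hw.mul (hG.rpow_const fun _ _ => Or.inr hs0.le)
  have hIoc : ∀ {p : ℝ → Prop}, (∀ x ∈ Icc α β, p x) →
      ∀ᵐ x ∂volume.restrict (Ioc α β), p x := fun hp =>
    ae_restrict_of_forall_mem measurableSet_Ioc fun x hx => hp x (Ioc_subset_Icc_self hx)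
  calc |∫ x in α..β, w x * h x|
      ≤ ∫ x in α..β, |w x * h x| := abs_integral_le_integral_abs hαβ
    _ ≤ ∫ x in α..β, w x * G x ^ s := by
        refine integral_mono_on hαβ (hh.continuousOn_mul hw').abs
          (hwGs.intervalIntegrable_of_Icc hαβ) fun x hx => ?_
        rw [abs_mul, abs_of_nonneg (hw0 x hx)]
        exact mul_le_mul_of_nonneg_left (hhG x hx) (hw0 x hx)
    _ ≤ _ := by
        simp only [integral_of_le hαβ]
        exact integral_mul_rpow_le hs0 hs1 (hw.intervalIntegrable_of_Icc hαβ).1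
          ((hw.mul hG).intervalIntegrable_of_Icc hαβ).1 (hIoc hw0) (hIoc hG0)

theorem integral_eq_sub_integral_sub_mul_deriv {f f' : ℝ → ℝ} {α β p : ℝ}
    (hf : ∀ x ∈ uIcc α β, HasDerivAt f (f' x) x) (hf' : IntervalIntegrable f' volume α β) :
    ∫ x in α..β, f x = (β - p) * f β - (α - p) * f α - ∫ x in α..β, (x - p) * f' x := by
  have hparts := integral_mul_deriv_eq_deriv_mul (fun x _ => (hasDerivAt_id x).sub_const p) hf
    intervalIntegrable_const hf'
  simp only [id_eq, one_mul] at hparts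
  linarith

end intervalIntegral

theorem two_mul_rpow_add_rpow_div_three_rpow_le {A B q : ℝ} (hA : 0 ≤ A) (hB : 0 ≤ B)
    (hq : 1 ≤ q) : ((2 * A ^ q + B ^ q) / 3) ^ (1 / q) ≤ (2 ^ (1 / q) * A + B) / 3 ^ (1 / q) := by
  have hq0 : q ≠ 0 := by positivity
  rw [Real.div_rpow (by positivity) (by norm_num)]
  gcongr
  calc (2 * A ^ q + B ^ q) ^ (1 / q) ≤ (2 * A ^ q) ^ (1 / q) + (B ^ q) ^ (1 / q) :=
        Real.rpow_add_le_add_rpow (by positivity) (by positivity) (by positivity)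
          (by rw [one_div]; exact inv_le_one_of_one_le₀ hq)
    _ = 2 ^ (1 / q) * A + B := by
        rw [Real.mul_rpow (by norm_num) (by positivity), one_div, Real.rpow_rpow_inv hA hq0,
          Real.rpow_rpow_inv hB hq0]

theorem abs_integral_zero_half_mul_le {h : ℝ → ℝ} {A B q : ℝ} (hA : 0 ≤ A) (hB : 0 ≤ B)
    (hq : 1 ≤ q) (hh : IntervalIntegrable h volume 0 (1 / 2))
    (hbound : ∀ t ∈ Icc (0 : ℝ) (1 / 2), |h t| ^ q ≤ (1 - t) * A ^ q + t * B ^ q) :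
    |∫ t in (0 : ℝ)..1 / 2, t * h t| ≤ 1 / 8 * ((2 ^ (1 / q) * A + B) / 3 ^ (1 / q)) := by
  have hq0 : 0 < q := by positivity
  have hG0 : ∀ t ∈ Icc (0 : ℝ) (1 / 2), 0 ≤ (1 - t) * A ^ q + t * B ^ q := fun t ht =>
    add_nonneg (mul_nonneg (by linarith [ht.2]) (by positivity)) (mul_nonneg ht.1 (by positivity))
  have hhG : ∀ t ∈ Icc (0 : ℝ) (1 / 2), |h t| ≤ ((1 - t) * A ^ q + t * B ^ q) ^ (1 / q) :=
    fun t ht => by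
      rw [one_div, Real.le_rpow_inv_iff_of_pos (abs_nonneg _) (hG0 t ht) hq0]
      exact hbound t ht
  have hweight : ∫ t in (0 : ℝ)..1 / 2, t = 1 / 8 := by norm_num [integral_id]
  have hweighted : ∫ t in (0 : ℝ)..1 / 2, t * ((1 - t) * A ^ q + t * B ^ q)
      = 1 / 8 * ((2 * A ^ q + B ^ q) / 3) := by
    have hpoly : (fun t : ℝ => t * ((1 - t) * A ^ q + t * B ^ q))
        = fun t => A ^ q * t + (B ^ q - A ^ q) * t ^ 2 := by
      funext t; ring
    rw [hpoly, intervalIntegral.integral_add, intervalIntegral.integral_const_mul,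
      intervalIntegral.integral_const_mul, integral_id, integral_pow]
    · ring
    all_goals exact (by fun_prop : Continuous _).intervalIntegrable _ _
  calc |∫ t in (0 : ℝ)..1 / 2, t * h t|
      ≤ (∫ t in (0 : ℝ)..1 / 2, t) ^ (1 - 1 / q)
          * (∫ t in (0 : ℝ)..1 / 2, t * ((1 - t) * A ^ q + t * B ^ q)) ^ (1 / q) :=
        abs_integral_mul_le_rpow (by norm_num) (by positivity)
          (by rw [one_div]; exact inv_le_one_of_one_le₀ hq) continuousOn_id (by fun_prop) hh
          (fun t ht => ht.1) hG0 hhG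
    _ = 1 / 8 * ((2 * A ^ q + B ^ q) / 3) ^ (1 / q) := by
        rw [hweight, hweighted, Real.mul_rpow (by norm_num) (by positivity), ← mul_assoc,
          ← Real.rpow_add (by norm_num), sub_add_cancel, Real.rpow_one]
    _ ≤ 1 / 8 * ((2 ^ (1 / q) * A + B) / 3 ^ (1 / q)) := by
        gcongr
        exact two_mul_rpow_add_rpow_div_three_rpow_le hA hB hq

theorem integral_zero_one_sub_midpoint_eq {g g' : ℝ → ℝ}
    (hg : ∀ t ∈ Icc (0 : ℝ) 1, HasDerivAt g (g' t) t) (hg' : IntervalIntegrable g' volume 0 1) :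
    (∫ t in (0 : ℝ)..1, g t) - g (1 / 2)
      = (∫ t in (0 : ℝ)..1 / 2, t * g' (1 - t)) - ∫ t in (0 : ℝ)..1 / 2, t * g' t := by
  have hunit : uIcc (0 : ℝ) 1 = Icc 0 1 := uIcc_of_le zero_le_one
  have hleft : uIcc (0 : ℝ) (1 / 2) ⊆ Icc 0 1 := by
    rw [uIcc_of_le (by norm_num)]; exact Icc_subset_Icc le_rfl (by norm_num)
  have hright : uIcc (1 / 2 : ℝ) 1 ⊆ Icc 0 1 := by
    rw [uIcc_of_le (by norm_num)]; exact Icc_subset_Icc (by norm_num) le_rfl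
  have hgc : ContinuousOn g (uIcc 0 1) :=
    hunit ▸ fun t ht => (hg t ht).continuousAt.continuousWithinAt
  have hsplit := integral_add_adjacent_intervals (μ := volume)
    (hgc.mono (hunit ▸ hleft)).intervalIntegrable (hgc.mono (hunit ▸ hright)).intervalIntegrable
  have hparts_left := integral_eq_sub_integral_sub_mul_deriv (p := 0)
    (fun t ht => hg t (hleft ht)) (hg'.mono_set (hunit ▸ hleft))
  have hparts_right := integral_eq_sub_integral_sub_mul_deriv (p := 1)
    (fun t ht => hg t (hright ht)) (hg'.mono_set (hunit ▸ hright))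
  have hreflect : ∫ t in (1 / 2 : ℝ)..1, (t - 1) * g' t
      = -∫ t in (0 : ℝ)..1 / 2, t * g' (1 - t) := by
    have hsub := integral_comp_sub_left (fun y => (1 - y) * g' y) (1 : ℝ) (a := 0) (b := 1 / 2)
    norm_num at hsub
    rw [hsub, ← intervalIntegral.integral_neg]
    congr 1; funext t; ring
  rw [← hsplit, hparts_left, hparts_right, hreflect]
  simp only [sub_zero]
  ring

theorem abs_integral_zero_one_sub_midpoint_le {g g' : ℝ → ℝ} {A B q : ℝ} (hA : 0 ≤ A)
    (hB : 0 ≤ B) (hq : 1 ≤ q) (hg : ∀ t ∈ Icc (0 : ℝ) 1, HasDerivAt g (g' t) t)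
    (hg' : IntervalIntegrable g' volume 0 1)
    (hbound : ∀ t ∈ Icc (0 : ℝ) 1, |g' t| ^ q ≤ (1 - t) * A ^ q + t * B ^ q) :
    |(∫ t in (0 : ℝ)..1, g t) - g (1 / 2)|
      ≤ 1 / 8 * ((2 ^ (1 / q) + 1) / 3 ^ (1 / q)) * (A + B) := by
  have hhalf : Icc (0 : ℝ) (1 / 2) ⊆ Icc 0 1 := Icc_subset_Icc le_rfl (by norm_num)
  have hhalf' : uIcc (0 : ℝ) (1 / 2) ⊆ uIcc 0 1 := by
    rw [uIcc_of_le (by norm_num), uIcc_of_le zero_le_one]; exact hhalf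
  have hbound_left := abs_integral_zero_half_mul_le hA hB hq (hg'.mono_set hhalf')
    fun t ht => hbound t (hhalf ht)
  have hbound_right := abs_integral_zero_half_mul_le hB hA hq
    ((hg'.comp_sub_left 1).symm.mono_set (by norm_num; exact hhalf)) fun t ht => by
      have := hbound (1 - t) ⟨by linarith [ht.2], by linarith [ht.1]⟩
      rw [sub_sub_cancel] at this
      linarith
  calc |(∫ t in (0 : ℝ)..1, g t) - g (1 / 2)|
      ≤ |∫ t in (0 : ℝ)..1 / 2, t * g' (1 - t)| + |∫ t in (0 : ℝ)..1 / 2, t * g' t| := by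
        rw [integral_zero_one_sub_midpoint_eq hg hg']; exact abs_sub _ _
    _ ≤ _ := add_le_add hbound_right hbound_left
    _ = _ := by ring

theorem phi_convex_midpoint_subadd (a c A B q : ℝ) (hc : 0 < c) (hq : 1 ≤ q)
    (hA : 0 ≤ A) (hB : 0 ≤ B) (f f' : ℝ → ℝ)
    (hf : ∀ x ∈ Set.Icc a (a + c), HasDerivAt f (f' x) x)
    (hint : IntervalIntegrable f' volume a (a + c))
    (hbound : ∀ t ∈ Set.Icc (0:ℝ) 1,
      |f' (a + t * c)| ^ q ≤ (1 - t) * A ^ q + t * B ^ q) :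
    |(1 / c) * (∫ x in a..(a + c), f x) - f (a + c / 2)| ≤
      (c / 8) * ((2 ^ (1 / q) + 1) / 3 ^ (1 / q)) * (A + B) := by
  have hmaps : ∀ t ∈ Icc (0 : ℝ) 1, a + c * t ∈ Icc a (a + c) := fun t ht =>
    ⟨by nlinarith [ht.1], by nlinarith [ht.2]⟩
  have hderiv : ∀ t ∈ Icc (0 : ℝ) 1,
      HasDerivAt (fun t => f (a + c * t)) (f' (a + c * t) * c) t := fun t ht => by
    have h := (hf _ (hmaps t ht)).comp t (((hasDerivAt_id' t).const_mul c).const_add a)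
    rwa [mul_one] at h
  have hint_unit : IntervalIntegrable (fun t => f' (a + c * t) * c) volume 0 1 := by
    have h := (hint.comp_add_left a).comp_mul_left (c := c)
    simp only [sub_self, zero_div, add_sub_cancel_left, div_self hc.ne'] at h
    exact h.mul_const c
  have hbound_unit : ∀ t ∈ Icc (0 : ℝ) 1,
      |f' (a + c * t) * c| ^ q ≤ (1 - t) * (A * c) ^ q + t * (B * c) ^ q := fun t ht => by
    rw [abs_mul, abs_of_pos hc, Real.mul_rpow (abs_nonneg _) hc.le, Real.mul_rpow hA hc.le,
      Real.mul_rpow hB hc.le, mul_comm c t]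
    nlinarith [hbound t ht, Real.rpow_pos_of_pos hc q]
  have hrescale : ∫ t in (0 : ℝ)..1, f (a + c * t) = (1 / c) * ∫ x in a..(a + c), f x := by
    rw [integral_comp_add_mul _ hc.ne', mul_zero, add_zero, mul_one, smul_eq_mul, one_div]
  have hunit := abs_integral_zero_one_sub_midpoint_le (mul_nonneg hA hc.le)
    (mul_nonneg hB hc.le) hq hderiv hint_unit hbound_unit
  rw [hrescale, mul_one_div] at hunit
  linarith
end
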